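/- arXiv:1604.04134 — 2 statements merged into one kernel-verified Lean document; each statement's English description precedes it below -/
import Mathlib

section
/- Theorem 9.2, temporal Einstein field equation (equation (9.21)): let g be the almost FLRW metric in the conformal-Newtonian gauge with equal Bardeen invariants, g_{00} = −a²(1+2A), g_{0i} = 0, g_{ij} = a²(1−2A)δ_{ij}, where a > 0 is a smooth function of x⁰ alone and A is smooth with 1+2A > 0 and 1−2A > 0, and let Λ, G_N ∈ ℝ and ρ : U → ℝ be smooth. Then at each point of U the temporal Einstein field equation G_{00} + Λ g_{00} = 8π G_N a²(1+2A) ρ holds if and only if ((1+2A)/(1−2A)³) Σ_{k=1}^{3} (3 (∂_k A)² + 2(1−2A) ∂_k ∂_k A) + 3(𝓗 − ∂_0 A/(1−2A))² = a²(1+2A)(Λ + 8π G_N ρ), where 𝓗 = (∂_0 a)/a. -/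
noncomputable section

/-- Points of the spacetime coordinate domain `U ⊆ ℝ⁴`. -/
abbrev Pt : Type := Fin 4 → ℝ

/-- Scalar fields on `ℝ⁴`. -/
abbrev SF : Type := Pt → ℝ

/-- Partial derivative `∂_a f` in the `x^a`-coordinate direction. -/
def pd (a : Fin 4) (f : SF) : SF := fun x => fderiv ℝ f x (Pi.single a 1)

/-- Threading derivative `δ_i f = ∂_i f − A_i ∂_0 f`. -/
def sd (A : Fin 3 → SF) (i : Fin 3) (f : SF) : SF := fun x =>
  pd i.succ f x - A i x * pd 0 f x

/-- `A_i = −Φ⁻² ξ_i`. -/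
def Acoef (Φ : SF) (ξ : Fin 3 → SF) (i : Fin 3) : SF := fun x => -(Φ x ^ 2)⁻¹ * ξ i x

/-- vorticity `ω_{ij} = ½ (δ_i A_j − δ_j A_i)`. -/
def vort (A : Fin 3 → SF) (i j : Fin 3) : SF := fun x =>
  (1 / 2) * (sd A i (A j) x - sd A j (A i) x)

/-- `a_i = −∂_0 A_i`. -/
def aco (A : Fin 3 → SF) (i : Fin 3) : SF := fun x => -pd 0 (A i) x

/-- `c_i = Φ⁻¹ δ_i Φ`. -/
def cco (Φ : SF) (A : Fin 3 → SF) (i : Fin 3) : SF := fun x => (Φ x)⁻¹ * sd A i Φ x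

/-- `b_i = a_i + c_i`. -/
def bco (Φ : SF) (A : Fin 3 → SF) (i : Fin 3) : SF := fun x => aco A i x + cco Φ A i x

/-- `Ψ = Φ⁻¹ ∂_0 Φ`. -/
def PsiF (Φ : SF) : SF := fun x => (Φ x)⁻¹ * pd 0 Φ x

/-- inverse entries `ḡ^{ij}` of the spatial metric. -/
def ginv (gb : Fin 3 → Fin 3 → SF) (i j : Fin 3) : SF := fun x =>
  (Matrix.of fun a b => gb a b x)⁻¹ i j

/-- expansion tensor `Θ_{ij} = ½ ∂_0 ḡ_{ij}`. -/
def Th (gb : Fin 3 → Fin 3 → SF) (i j : Fin 3) : SF := fun x => (1 / 2) * pd 0 (gb i j) x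

/-- expansion function `Θ = ḡ^{ij} Θ_{ij}`. -/
def ExpF (gb : Fin 3 → Fin 3 → SF) : SF := fun x => ∑ i, ∑ j, ginv gb i j x * Th gb i j x

/-- shear `σ_{ij} = Θ_{ij} − ⅓ Θ ḡ_{ij}`. -/
def shear (gb : Fin 3 → Fin 3 → SF) (i j : Fin 3) : SF := fun x =>
  Th gb i j x - (1 / 3) * ExpF gb x * gb i j x

/-- extrinsic curvature `K_{ij} = Θ_{ij} + Φ² ω_{ij}`. -/
def Kt (Φ : SF) (A : Fin 3 → SF) (gb : Fin 3 → Fin 3 → SF) (i j : Fin 3) : SF := fun x =>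
  Th gb i j x + Φ x ^ 2 * vort A i j x

/-- `K^h_i = ḡ^{hm} K_{mi}`. -/
def Km (Φ : SF) (A : Fin 3 → SF) (gb : Fin 3 → Fin 3 → SF) (h i : Fin 3) : SF := fun x =>
  ∑ m, ginv gb h m x * Kt Φ A gb m i x

/-- coefficients `Γ̄^k_{ij}` of the Riemannian spatial connection. -/
def Gamb (A : Fin 3 → SF) (gb : Fin 3 → Fin 3 → SF) (k i j : Fin 3) : SF := fun x =>
  (1 / 2) * ∑ h, ginv gb k h x *
    (sd A i (gb h j) x + sd A j (gb h i) x - sd A h (gb i j) x)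

/-- curvature `R̄^h_{i jk}` of the Riemannian spatial connection. -/
def barR (Φ : SF) (A : Fin 3 → SF) (gb : Fin 3 → Fin 3 → SF) (h i j k : Fin 3) : SF := fun x =>
  sd A k (Gamb A gb h i j) x - sd A j (Gamb A gb h i k) x
    + (∑ l, (Gamb A gb l i j x * Gamb A gb h l k x - Gamb A gb l i k x * Gamb A gb h l j x))
    - 2 * Km Φ A gb h i x * vort A j k x

/-- spatial covariant derivative `K^h_{i|k}`. -/
def Kcov (Φ : SF) (A : Fin 3 → SF) (gb : Fin 3 → Fin 3 → SF) (h i k : Fin 3) : SF := fun x =>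
  sd A k (Km Φ A gb h i) x
    + ∑ l, (Km Φ A gb l i x * Gamb A gb h l k x - Km Φ A gb h l x * Gamb A gb l i k x)

/-- mixed curvature `R̄^h_{i 0k} = K^h_{i|k} − ∂_0 Γ̄^h_{ik} + K^h_i a_k`. -/
def barR0 (Φ : SF) (A : Fin 3 → SF) (gb : Fin 3 → Fin 3 → SF) (h i k : Fin 3) : SF := fun x =>
  Kcov Φ A gb h i k x - pd 0 (Gamb A gb h i k) x + Km Φ A gb h i x * aco A k x

/-- lowered curvature `R̄_{il jk} = ḡ_{lh} R̄^h_{i jk}`. -/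
def barRlow (Φ : SF) (A : Fin 3 → SF) (gb : Fin 3 → Fin 3 → SF) (i l j k : Fin 3) : SF := fun x =>
  ∑ h, gb l h x * barR Φ A gb h i j k x

/-- lowered mixed curvature `R̄_{il 0k} = ḡ_{lh} R̄^h_{i 0k}`. -/
def barR0low (Φ : SF) (A : Fin 3 → SF) (gb : Fin 3 → Fin 3 → SF) (i l k : Fin 3) : SF := fun x =>
  ∑ h, gb l h x * barR0 Φ A gb h i k x

/-- spatial covariant derivative `R̄^l_{h ij|k}`. -/
def barRcov (Φ : SF) (A : Fin 3 → SF) (gb : Fin 3 → Fin 3 → SF) (l h i j k : Fin 3) : SF :=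
  fun x =>
  sd A k (barR Φ A gb l h i j) x
    + ∑ m, (barR Φ A gb m h i j x * Gamb A gb l m k x
        - barR Φ A gb l m i j x * Gamb A gb m h k x
        - barR Φ A gb l h m j x * Gamb A gb m i k x
        - barR Φ A gb l h i m x * Gamb A gb m j k x)

/-- temporal covariant derivative `R̄^l_{h ij|0}`. -/
def barRcov0 (Φ : SF) (A : Fin 3 → SF) (gb : Fin 3 → Fin 3 → SF) (l h i j : Fin 3) : SF :=
  fun x =>
  pd 0 (barR Φ A gb l h i j) x
    + ∑ m, (barR Φ A gb m h i j x * Km Φ A gb l m x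
        - barR Φ A gb l m i j x * Km Φ A gb m h x
        - barR Φ A gb l h m j x * Km Φ A gb m i x
        - barR Φ A gb l h i m x * Km Φ A gb m j x)

/-- spatial covariant derivative `R̄^l_{h 0i|j}`. -/
def barR0cov (Φ : SF) (A : Fin 3 → SF) (gb : Fin 3 → Fin 3 → SF) (l h i j : Fin 3) : SF :=
  fun x =>
  sd A j (barR0 Φ A gb l h i) x
    + ∑ m, (barR0 Φ A gb m h i x * Gamb A gb l m j x
        - barR0 Φ A gb l m i x * Gamb A gb m h j x
        - barR0 Φ A gb l h m x * Gamb A gb m i j x)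

/-- spatial covariant derivative `K_{ij|k}`. -/
def Ktcov (Φ : SF) (A : Fin 3 → SF) (gb : Fin 3 → Fin 3 → SF) (i j k : Fin 3) : SF := fun x =>
  sd A k (Kt Φ A gb i j) x
    - ∑ h, (Kt Φ A gb h j x * Gamb A gb h i k x + Kt Φ A gb i h x * Gamb A gb h j k x)

/-- temporal covariant derivative `K_{ik|0}`. -/
def Ktcov0 (Φ : SF) (A : Fin 3 → SF) (gb : Fin 3 → Fin 3 → SF) (i k : Fin 3) : SF := fun x =>
  pd 0 (Kt Φ A gb i k) x
    - ∑ h, (Kt Φ A gb h k x * Km Φ A gb h i x + Kt Φ A gb i h x * Km Φ A gb h k x)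

/-- spatial covariant derivative `b_{i|k} = δ_k b_i − b_h Γ̄^h_{ik}`. -/
def bcov (Φ : SF) (A : Fin 3 → SF) (gb : Fin 3 → Fin 3 → SF) (i k : Fin 3) : SF := fun x =>
  sd A k (bco Φ A i) x - ∑ h, bco Φ A h x * Gamb A gb h i k x

/-- `σ² = ḡ^{hi} ḡ^{kj} σ_{hk} σ_{ij}`. -/
def sigma2 (gb : Fin 3 → Fin 3 → SF) : SF := fun x =>
  ∑ h, ∑ i, ∑ k, ∑ j, ginv gb h i x * ginv gb k j x * shear gb h k x * shear gb i j x

/-- `ω² = ḡ^{hi} ḡ^{kj} ω_{hk} ω_{ij}`. -/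
def omega2 (A : Fin 3 → SF) (gb : Fin 3 → Fin 3 → SF) : SF := fun x =>
  ∑ h, ∑ i, ∑ k, ∑ j, ginv gb h i x * ginv gb k j x * vort A h k x * vort A i j x

/-- `b² = ḡ^{kh} b_k b_h`. -/
def bsq (Φ : SF) (A : Fin 3 → SF) (gb : Fin 3 → Fin 3 → SF) : SF := fun x =>
  ∑ k, ∑ h, ginv gb k h x * bco Φ A k x * bco Φ A h x

/-- `b^k = ḡ^{kh} b_h`. -/
def bup (Φ : SF) (A : Fin 3 → SF) (gb : Fin 3 → Fin 3 → SF) (k : Fin 3) : SF := fun x =>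
  ∑ h, ginv gb k h x * bco Φ A h x

/-- divergence `b^k_{|k} = δ_k b^k + b^l Γ̄^k_{lk}`. -/
def bdiv (Φ : SF) (A : Fin 3 → SF) (gb : Fin 3 → Fin 3 → SF) : SF := fun x =>
  ∑ k, (sd A k (bup Φ A gb k) x + ∑ l, bup Φ A gb l x * Gamb A gb k l k x)

/-- spatial Ricci tensor `R̄_{ij} = ½(R̄^k_{i jk} + R̄^k_{j ik})`. -/
def barRic (Φ : SF) (A : Fin 3 → SF) (gb : Fin 3 → Fin 3 → SF) (i j : Fin 3) : SF := fun x =>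
  (1 / 2) * ((∑ k, barR Φ A gb k i j k x) + ∑ k, barR Φ A gb k j i k x)

/-- spatial scalar curvature `R̄ = ḡ^{ij} R̄_{ij}`. -/
def barScal (Φ : SF) (A : Fin 3 → SF) (gb : Fin 3 → Fin 3 → SF) : SF := fun x =>
  ∑ i, ∑ j, ginv gb i j x * barRic Φ A gb i j x

/-! ### 4-dimensional (spacetime) objects -/

/-- inverse entries `g^{ab}` of a spacetime metric. -/
def mginv (g : Fin 4 → Fin 4 → SF) (a b : Fin 4) : SF := fun x =>
  (Matrix.of fun c d => g c d x)⁻¹ a b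

/-- Christoffel symbols `Γ^c_{ab}` of a spacetime metric. -/
def Chr (g : Fin 4 → Fin 4 → SF) (c a b : Fin 4) : SF := fun x =>
  (1 / 2) * ∑ d, mginv g c d x * (pd a (g d b) x + pd b (g d a) x - pd d (g a b) x)

/-- curvature `R^d_{c ab}` of a spacetime metric. -/
def Riem (g : Fin 4 → Fin 4 → SF) (d c a b : Fin 4) : SF := fun x =>
  pd a (Chr g d c b) x - pd b (Chr g d c a) x
    + ∑ e, (Chr g e c b x * Chr g d e a x - Chr g e c a x * Chr g d e b x)

/-- lowered curvature `R_{dc ab} = g_{de} R^e_{c ab}`. -/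
def RiemLow (g : Fin 4 → Fin 4 → SF) (d c a b : Fin 4) : SF := fun x =>
  ∑ e, g d e x * Riem g e c a b x

/-- Ricci tensor `Ric_{cb} = R^a_{c ab}`. -/
def Ricc (g : Fin 4 → Fin 4 → SF) (c b : Fin 4) : SF := fun x => ∑ a, Riem g a c a b x

/-- scalar curvature `𝐑 = g^{ab} Ric_{ab}`. -/
def Scal (g : Fin 4 → Fin 4 → SF) : SF := fun x => ∑ a, ∑ b, mginv g a b x * Ricc g a b x

/-- Einstein tensor `G_{ab} = Ric_{ab} − ½ 𝐑 g_{ab}`. -/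
def Einst (g : Fin 4 → Fin 4 → SF) (a b : Fin 4) : SF := fun x =>
  Ricc g a b x - (1 / 2) * Scal g x * g a b x

/-- the spacetime metric determined by `Φ, ξ_i, ḡ_{ij}`:
`g_{00} = −Φ²`, `g_{0i} = g_{i0} = ξ_i`, `g_{ij} = ḡ_{ij} − Φ⁻² ξ_i ξ_j`. -/
def gmet (Φ : SF) (ξ : Fin 3 → SF) (gb : Fin 3 → Fin 3 → SF) (a b : Fin 4) : SF := fun x =>
  Fin.cases
    (Fin.cases (-(Φ x ^ 2)) (fun j => ξ j x) b)
    (fun i => Fin.cases (ξ i x) (fun j => gb i j x - (Φ x ^ 2)⁻¹ * ξ i x * ξ j x) b) a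

/-- the threading frame: `e_0^a = δ^a_0`, `e_i^a = δ^a_i − A_i δ^a_0`. -/
def frameV (Φ : SF) (ξ : Fin 3 → SF) (P : Fin 4) (x : Pt) (a : Fin 4) : ℝ :=
  Fin.cases ((if a = 0 then (1 : ℝ) else 0))
    (fun i => (if a = i.succ then (1 : ℝ) else 0)
      - Acoef Φ ξ i x * (if a = 0 then (1 : ℝ) else 0)) P

/-- frame components `R_{PQ ST} = e_Q^d e_P^c e_T^a e_S^b R_{dc ab}` of the curvature. -/
def RiemF (Φ : SF) (ξ : Fin 3 → SF) (gb : Fin 3 → Fin 3 → SF) (P Q S T : Fin 4) : SF := fun x =>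
  ∑ d, ∑ c, ∑ a, ∑ b,
    frameV Φ ξ Q x d * frameV Φ ξ P x c * frameV Φ ξ T x a * frameV Φ ξ S x b *
      RiemLow (gmet Φ ξ gb) d c a b x


/-- the almost FLRW metric in the conformal-Newtonian gauge with equal Bardeen
invariants: `g_{00} = −a²(1+2A)`, `g_{0i} = 0`, `g_{ij} = a²(1−2A)δ_{ij}`. -/
def flrwMet (a : ℝ → ℝ) (A : SF) : Fin 4 → Fin 4 → SF := fun p q x =>
  Fin.cases
    (Fin.cases (-(a (x 0) ^ 2 * (1 + 2 * A x))) (fun _ => 0) q)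
    (fun i => Fin.cases 0 (fun j => a (x 0) ^ 2 * (1 - 2 * A x) * (if i = j then 1 else 0)) q) p

namespace S18

/-! ### pd toolkit -/
variable {f g : SF} {x : Pt} {m : Fin 4}

lemma pd_congr {U : Set Pt} (hU : IsOpen U) (hx : x ∈ U) {f g : SF}
    (h : ∀ y ∈ U, f y = g y) (m : Fin 4) : pd m f x = pd m g x := by
  unfold pd
  rw [Filter.EventuallyEq.fderiv_eq (Filter.eventuallyEq_of_mem (hU.mem_nhds hx) h)]

lemma pd_const (m : Fin 4) (x : Pt) (c : ℝ) : pd m (fun _ => c) x = 0 := by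
  unfold pd; simp

lemma pd_add (hf : DifferentiableAt ℝ f x) (hg : DifferentiableAt ℝ g x) :
    pd m (fun y => f y + g y) x = pd m f x + pd m g x := by
  unfold pd; rw [fderiv_fun_add hf hg]; simp

lemma pd_neg (f : SF) : pd m (fun y => -f y) x = -pd m f x := by
  unfold pd; rw [fderiv_fun_neg]; simp

lemma pd_sub (hf : DifferentiableAt ℝ f x) (hg : DifferentiableAt ℝ g x) :
    pd m (fun y => f y - g y) x = pd m f x - pd m g x := by
  unfold pd; rw [fderiv_fun_sub hf hg]; simp

lemma pd_mul (hf : DifferentiableAt ℝ f x) (hg : DifferentiableAt ℝ g x) :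
    pd m (fun y => f y * g y) x = pd m f x * g x + f x * pd m g x := by
  unfold pd; rw [fderiv_fun_mul hf hg]; simp; ring

lemma pd_cmul (hf : DifferentiableAt ℝ f x) (c : ℝ) :
    pd m (fun y => c * f y) x = c * pd m f x := by
  unfold pd; rw [fderiv_const_mul hf]; simp

lemma pd_mul_const (hf : DifferentiableAt ℝ f x) (c : ℝ) :
    pd m (fun y => f y * c) x = pd m f x * c := by
  unfold pd; rw [fderiv_mul_const hf]; simp [mul_comm]

lemma pd_inv (hf : DifferentiableAt ℝ f x) (h0 : f x ≠ 0) :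
    pd m (fun y => (f y)⁻¹) x = -((f x)^2)⁻¹ * pd m f x := by
  unfold pd
  rw [show (fun y => (f y)⁻¹) = (fun t : ℝ => t⁻¹) ∘ f from rfl,
      fderiv_comp x (differentiableAt_inv h0) hf, fderiv_inv]
  simp; ring

lemma pd_comp0 (b : ℝ → ℝ) (hb : DifferentiableAt ℝ b (x 0)) :
    pd m (fun y => b (y 0)) x = if m = 0 then deriv b (x 0) else 0 := by
  unfold pd
  have h1 : HasFDerivAt (fun y : Pt => y 0)
      ((ContinuousLinearMap.proj (R := ℝ) (φ := fun _ : Fin 4 => ℝ) (0 : Fin 4))) x :=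
    (ContinuousLinearMap.proj (R := ℝ) (φ := fun _ : Fin 4 => ℝ) (0 : Fin 4)).hasFDerivAt
  rw [show (fun y : Pt => b (y 0)) = b ∘ (fun y : Pt => y 0) from rfl,
      (hb.hasDerivAt.comp_hasFDerivAt x h1).fderiv]
  simp [Pi.single_apply]
  rcases eq_or_ne m 0 with h|h <;> simp [h, eq_comm]

lemma diffAt_comp0 {b : ℝ → ℝ} (hb : DifferentiableAt ℝ b (x 0)) :
    DifferentiableAt ℝ (fun y : Pt => b (y 0)) x :=
  hb.comp x ((ContinuousLinearMap.proj (R := ℝ) (φ := fun _ : Fin 4 => ℝ) (0 : Fin 4)).differentiableAt)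

lemma diffAt_pd {U : Set Pt} (hU : IsOpen U) {A : SF} (hA : ContDiffOn ℝ (⊤ : ℕ∞) A U)
    (hx : x ∈ U) (m : Fin 4) : DifferentiableAt ℝ (pd m A) x := by
  have h1 : ContDiffAt ℝ (⊤ : ℕ∞) A x := hA.contDiffAt (hU.mem_nhds hx)
  have h2 : ContDiffAt ℝ (⊤ : ℕ∞) (fderiv ℝ A) x := h1.fderiv_right (le_of_eq (by simp))
  have h3 : ContDiffAt ℝ (⊤ : ℕ∞) (fun y => fderiv ℝ A y (Pi.single m 1)) x :=
    h2.clm_apply contDiffAt_const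
  exact h3.differentiableAt (by simp)


/-! ### metric components -/
section met
variable (a : ℝ → ℝ) (A : SF) (y : Pt)

lemma met00 : flrwMet a A 0 0 = fun y => -(a (y 0)^2 * (1+2*A y)) := rfl
lemma met0s (j : Fin 3) : flrwMet a A 0 j.succ = fun _ => 0 := rfl
lemma mets0 (i : Fin 3) : flrwMet a A i.succ 0 = fun _ => 0 := rfl
lemma metss (i j : Fin 3) : flrwMet a A i.succ j.succ
    = fun y => a (y 0)^2 * (1-2*A y) * (if i = j then 1 else 0) := rfl

/-- explicit inverse metric entries -/
def gInvE : Fin 4 → Fin 4 → SF := fun p q y =>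
  Fin.cases
    (Fin.cases (-(a (y 0)^2 * (1+2*A y))⁻¹) (fun _ => 0) q)
    (fun i => Fin.cases 0 (fun j => if i = j then (a (y 0)^2 * (1-2*A y))⁻¹ else 0) q) p

lemma gInvE00 : gInvE a A 0 0 y = -(a (y 0)^2 * (1+2*A y))⁻¹ := rfl
lemma gInvE0s (j : Fin 3) : gInvE a A 0 j.succ y = 0 := rfl
lemma gInvEs0 (i : Fin 3) : gInvE a A i.succ 0 y = 0 := rfl
lemma gInvEss (i j : Fin 3) : gInvE a A i.succ j.succ y
    = if i = j then (a (y 0)^2 * (1-2*A y))⁻¹ else 0 := rfl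

lemma matinv (ha : a (y 0) ≠ 0) (hF : 1+2*A y ≠ 0) (hG : 1-2*A y ≠ 0) :
    (Matrix.of fun c d => flrwMet a A c d y)⁻¹ = Matrix.of fun c d => gInvE a A c d y := by
  apply Matrix.inv_eq_right_inv
  ext p q
  rw [Matrix.mul_apply]
  refine Fin.cases ?_ (fun i => ?_) p <;> refine Fin.cases ?_ (fun j => ?_) q
  · simp [Fin.sum_univ_succ, gInvE, flrwMet, Matrix.one_apply, Fin.succ_ne_zero,
      (Fin.succ_ne_zero _).symm, Fin.succ_inj, mul_ite]
    field_simp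
  · simp [Fin.sum_univ_succ, gInvE, flrwMet, Matrix.one_apply, Fin.succ_ne_zero,
      (Fin.succ_ne_zero _).symm, Fin.succ_inj, mul_ite]
  · simp [Fin.sum_univ_succ, gInvE, flrwMet, Matrix.one_apply, Fin.succ_ne_zero,
      (Fin.succ_ne_zero _).symm, Fin.succ_inj, mul_ite]
  · rcases eq_or_ne i j with h|h <;>
      simp [Fin.sum_univ_succ, gInvE, flrwMet, Matrix.one_apply, Fin.succ_ne_zero,
        (Fin.succ_ne_zero _).symm, Fin.succ_inj, mul_ite, h]
    · field_simp

lemma mginv_eq (ha : a (y 0) ≠ 0) (hF : 1+2*A y ≠ 0) (hG : 1-2*A y ≠ 0) (c d : Fin 4) :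
    mginv (flrwMet a A) c d y = gInvE a A c d y := by
  unfold mginv
  rw [matinv a A y ha hF hG]
  rfl

end met

lemma sum4 (f : Fin 4 → ℝ) :
    ∑ d : Fin 4, f d = f 0 + f (Fin.succ 0) + f (Fin.succ 1) + f (Fin.succ 2) := by
  rw [Fin.sum_univ_four]; rfl

lemma sum3 (f : Fin 3 → ℝ) : ∑ d : Fin 3, f d = f 0 + f 1 + f 2 := Fin.sum_univ_three f

/-! ### derivatives of metric building blocks -/

variable {U : Set Pt} {a : ℝ → ℝ} {A : SF} {y : Pt}

lemma haD (ha : ContDiff ℝ (⊤ : ℕ∞) a) : Differentiable ℝ a := ha.differentiable (by simp)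

lemma ha'D (ha : ContDiff ℝ (⊤ : ℕ∞) a) : Differentiable ℝ (deriv a) :=
  ((contDiff_infty_iff_deriv.mp (ha.of_le (by simp))).2).differentiable (by simp)

lemma dA (hU : IsOpen U) (hA : ContDiffOn ℝ (⊤ : ℕ∞) A U) (hy : y ∈ U) : DifferentiableAt ℝ A y :=
  (hA.contDiffAt (hU.mem_nhds hy)).differentiableAt (by simp)

lemma dF (hU : IsOpen U) (hA : ContDiffOn ℝ (⊤ : ℕ∞) A U) (hy : y ∈ U) :
    DifferentiableAt ℝ (fun z : Pt => 1 + 2*A z) y :=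
  ((dA hU hA hy).const_mul 2).const_add 1

lemma dG (hU : IsOpen U) (hA : ContDiffOn ℝ (⊤ : ℕ∞) A U) (hy : y ∈ U) :
    DifferentiableAt ℝ (fun z : Pt => 1 - 2*A z) y :=
  (differentiableAt_const 1).sub ((dA hU hA hy).const_mul 2)

lemma da2 (ha : ContDiff ℝ (⊤ : ℕ∞) a) : DifferentiableAt ℝ (fun z : Pt => a (z 0)^2) y :=
  diffAt_comp0 ((haD ha (y 0)).pow 2)

lemma dw (ha : ContDiff ℝ (⊤ : ℕ∞) a) (hay : a (y 0) ≠ 0) :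
    DifferentiableAt ℝ (fun z : Pt => deriv a (z 0) * (a (z 0))⁻¹) y :=
  diffAt_comp0 ((ha'D ha (y 0)).mul ((haD ha (y 0)).inv hay))

lemma pdF_ (hU : IsOpen U) (hA : ContDiffOn ℝ (⊤ : ℕ∞) A U) (hy : y ∈ U) (m : Fin 4) :
    pd m (fun z : Pt => 1 + 2*A z) y = 2 * pd m A y := by
  rw [pd_add (f := fun _ : Pt => (1:ℝ)) (g := fun z : Pt => 2*A z)
      (differentiableAt_const 1) ((dA hU hA hy).const_mul 2),
    pd_cmul (dA hU hA hy) 2, pd_const]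
  ring

lemma pdG_ (hU : IsOpen U) (hA : ContDiffOn ℝ (⊤ : ℕ∞) A U) (hy : y ∈ U) (m : Fin 4) :
    pd m (fun z : Pt => 1 - 2*A z) y = -(2 * pd m A y) := by
  rw [pd_sub (f := fun _ : Pt => (1:ℝ)) (g := fun z : Pt => 2*A z)
      (differentiableAt_const 1) ((dA hU hA hy).const_mul 2),
    pd_cmul (dA hU hA hy) 2, pd_const]
  ring

lemma pdA2 (ha : ContDiff ℝ (⊤ : ℕ∞) a) (m : Fin 4) : pd m (fun z : Pt => a (z 0)^2) y
    = if m = 0 then 2 * a (y 0) * deriv a (y 0) else 0 := by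
  rw [pd_comp0 (fun t => a t ^ 2) ((haD ha (y 0)).pow 2),
      (((haD ha (y 0)).hasDerivAt).fun_pow 2).deriv]
  rcases eq_or_ne m 0 with h|h <;> simp [h] <;> ring

lemma pdw (ha : ContDiff ℝ (⊤ : ℕ∞) a) (hay : a (y 0) ≠ 0) (m : Fin 4) :
    pd m (fun z : Pt => deriv a (z 0) * (a (z 0))⁻¹) y
    = if m = 0 then deriv (deriv a) (y 0) * (a (y 0))⁻¹
        - (deriv a (y 0))^2 * ((a (y 0))^2)⁻¹ else 0 := by
  rw [pd_comp0 (fun t => deriv a t * (a t)⁻¹) ((ha'D ha (y 0)).mul ((haD ha (y 0)).inv hay)),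
      ((ha'D ha (y 0)).hasDerivAt.fun_mul (((haD ha (y 0)).hasDerivAt).fun_inv hay)).deriv]
  rcases eq_or_ne m 0 with h|h <;> simp [h]
  field_simp
  ring

lemma pdg00 (hU : IsOpen U) (ha : ContDiff ℝ (⊤ : ℕ∞) a) (hA : ContDiffOn ℝ (⊤ : ℕ∞) A U) (hy : y ∈ U)
    (m : Fin 4) : pd m (flrwMet a A 0 0) y
    = -((if m = 0 then 2 * a (y 0) * deriv a (y 0) else 0) * (1+2*A y)
        + a (y 0)^2 * (2 * pd m A y)) := by
  rw [met00, pd_neg (fun z : Pt => a (z 0)^2 * (1+2*A z)),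
      pd_mul (da2 ha) (dF hU hA hy), pdA2 ha, pdF_ hU hA hy]

lemma pdg0s (j : Fin 3) (m : Fin 4) : pd m (flrwMet a A 0 j.succ) y = 0 := by
  rw [met0s]; exact pd_const m y 0

lemma pdgs0 (i : Fin 3) (m : Fin 4) : pd m (flrwMet a A i.succ 0) y = 0 := by
  rw [mets0]; exact pd_const m y 0

lemma pdgss (hU : IsOpen U) (ha : ContDiff ℝ (⊤ : ℕ∞) a) (hA : ContDiffOn ℝ (⊤ : ℕ∞) A U) (hy : y ∈ U)
    (i j : Fin 3) (m : Fin 4) : pd m (flrwMet a A i.succ j.succ) y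
    = if i = j then ((if m = 0 then 2 * a (y 0) * deriv a (y 0) else 0) * (1-2*A y)
        + a (y 0)^2 * (-(2 * pd m A y))) else 0 := by
  rw [metss]
  rcases eq_or_ne i j with h|h
  · have h1 : (if i = j then (1:ℝ) else 0) = 1 := by simp [h]
    simp only [h1, mul_one, if_pos h]
    rw [pd_mul (da2 ha) (dG hU hA hy), pdA2 ha, pdG_ hU hA hy]
  · have h1 : (if i = j then (1:ℝ) else 0) = 0 := by simp [h]
    simp only [h1, mul_zero, if_neg h]
    exact pd_const m y 0

/-! ### Christoffel symbols -/

lemma chrk00 (hU : IsOpen U) (ha : ContDiff ℝ (⊤ : ℕ∞) a) (hA : ContDiffOn ℝ (⊤ : ℕ∞) A U) (hy : y ∈ U)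
    (hay : a (y 0) ≠ 0) (hF : 1 + 2*A y ≠ 0) (hG : 1 - 2*A y ≠ 0) (k : Fin 3) :
    Chr (flrwMet a A) k.succ 0 0 y = pd k.succ A y * (1-2*A y)⁻¹ := by
  simp only [Chr, sum4, mginv_eq a A y hay hF hG, gInvE00, gInvE0s, gInvEs0,
    gInvEss, pdg00 hU ha hA hy, pdg0s, pdgs0, pdgss hU ha hA hy,
    Fin.succ_ne_zero, if_false]
  fin_cases k <;>
    · simp only [Fin.zero_eta, Fin.mk_one, Fin.isValue, Fin.reduceEq, if_false, if_true,
        reduceIte, Fin.reduceFinMk]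
      field_simp
      ring

lemma chr000 (hU : IsOpen U) (ha : ContDiff ℝ (⊤ : ℕ∞) a) (hA : ContDiffOn ℝ (⊤ : ℕ∞) A U) (hy : y ∈ U)
    (hay : a (y 0) ≠ 0) (hF : 1 + 2*A y ≠ 0) (hG : 1 - 2*A y ≠ 0)  :
    Chr (flrwMet a A) 0 0 0 y = deriv a (y 0) * (a (y 0))⁻¹ + pd 0 A y * (1+2*A y)⁻¹ := by
  simp only [Chr, sum4, mginv_eq a A y hay hF hG, gInvE00, gInvE0s, gInvEs0,
    gInvEss, pdg00 hU ha hA hy, pdg0s, pdgs0, pdgss hU ha hA hy,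
    Fin.succ_ne_zero, if_false]
  simp only [reduceIte]
  field_simp
  ring

lemma chr00k (hU : IsOpen U) (ha : ContDiff ℝ (⊤ : ℕ∞) a) (hA : ContDiffOn ℝ (⊤ : ℕ∞) A U) (hy : y ∈ U)
    (hay : a (y 0) ≠ 0) (hF : 1 + 2*A y ≠ 0) (hG : 1 - 2*A y ≠ 0) (k : Fin 3) :
    Chr (flrwMet a A) 0 0 k.succ y = pd k.succ A y * (1+2*A y)⁻¹ := by
  simp only [Chr, sum4, mginv_eq a A y hay hF hG, gInvE00, gInvE0s, gInvEs0,
    gInvEss, pdg00 hU ha hA hy, pdg0s, pdgs0, pdgss hU ha hA hy,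
    Fin.succ_ne_zero, if_false]
  fin_cases k <;>

    · simp only [Fin.zero_eta, Fin.mk_one, Fin.isValue, Fin.reduceEq, if_false, if_true,
        reduceIte, Fin.reduceFinMk, Fin.succ_ne_zero, Fin.succ_inj]
      field_simp
      try ring

lemma chr0k0 (hU : IsOpen U) (ha : ContDiff ℝ (⊤ : ℕ∞) a) (hA : ContDiffOn ℝ (⊤ : ℕ∞) A U) (hy : y ∈ U)
    (hay : a (y 0) ≠ 0) (hF : 1 + 2*A y ≠ 0) (hG : 1 - 2*A y ≠ 0) (k : Fin 3) :
    Chr (flrwMet a A) 0 k.succ 0 y = pd k.succ A y * (1+2*A y)⁻¹ := by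
  simp only [Chr, sum4, mginv_eq a A y hay hF hG, gInvE00, gInvE0s, gInvEs0,
    gInvEss, pdg00 hU ha hA hy, pdg0s, pdgs0, pdgss hU ha hA hy,
    Fin.succ_ne_zero, if_false]
  fin_cases k <;>

    · simp only [Fin.zero_eta, Fin.mk_one, Fin.isValue, Fin.reduceEq, if_false, if_true,
        reduceIte, Fin.reduceFinMk, Fin.succ_ne_zero, Fin.succ_inj]
      field_simp
      try ring

lemma chr0ij (hU : IsOpen U) (ha : ContDiff ℝ (⊤ : ℕ∞) a) (hA : ContDiffOn ℝ (⊤ : ℕ∞) A U) (hy : y ∈ U)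
    (hay : a (y 0) ≠ 0) (hF : 1 + 2*A y ≠ 0) (hG : 1 - 2*A y ≠ 0) (i j : Fin 3) :
    Chr (flrwMet a A) 0 i.succ j.succ y = (deriv a (y 0)*(a (y 0))⁻¹*(1-2*A y) - pd 0 A y) * (1+2*A y)⁻¹ * (if i = j then 1 else 0) := by
  simp only [Chr, sum4, mginv_eq a A y hay hF hG, gInvE00, gInvE0s, gInvEs0,
    gInvEss, pdg00 hU ha hA hy, pdg0s, pdgs0, pdgss hU ha hA hy,
    Fin.succ_ne_zero, if_false]
  fin_cases i <;> fin_cases j <;>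

    · simp only [Fin.zero_eta, Fin.mk_one, Fin.isValue, Fin.reduceEq, if_false, if_true,
        reduceIte, Fin.reduceFinMk, Fin.succ_ne_zero, Fin.succ_inj]
      field_simp
      try ring

lemma chrk0j (hU : IsOpen U) (ha : ContDiff ℝ (⊤ : ℕ∞) a) (hA : ContDiffOn ℝ (⊤ : ℕ∞) A U) (hy : y ∈ U)
    (hay : a (y 0) ≠ 0) (hF : 1 + 2*A y ≠ 0) (hG : 1 - 2*A y ≠ 0) (k j : Fin 3) :
    Chr (flrwMet a A) k.succ 0 j.succ y = (deriv a (y 0)*(a (y 0))⁻¹ - pd 0 A y * (1-2*A y)⁻¹) * (if k = j then 1 else 0) := by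
  simp only [Chr, sum4, mginv_eq a A y hay hF hG, gInvE00, gInvE0s, gInvEs0,
    gInvEss, pdg00 hU ha hA hy, pdg0s, pdgs0, pdgss hU ha hA hy,
    Fin.succ_ne_zero, if_false]
  fin_cases k <;> fin_cases j <;>

    · simp only [Fin.zero_eta, Fin.mk_one, Fin.isValue, Fin.reduceEq, if_false, if_true,
        reduceIte, Fin.reduceFinMk, Fin.succ_ne_zero, Fin.succ_inj]
      field_simp
      try ring

lemma chrkj0 (hU : IsOpen U) (ha : ContDiff ℝ (⊤ : ℕ∞) a) (hA : ContDiffOn ℝ (⊤ : ℕ∞) A U) (hy : y ∈ U)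
    (hay : a (y 0) ≠ 0) (hF : 1 + 2*A y ≠ 0) (hG : 1 - 2*A y ≠ 0) (k j : Fin 3) :
    Chr (flrwMet a A) k.succ j.succ 0 y = (deriv a (y 0)*(a (y 0))⁻¹ - pd 0 A y * (1-2*A y)⁻¹) * (if k = j then 1 else 0) := by
  simp only [Chr, sum4, mginv_eq a A y hay hF hG, gInvE00, gInvE0s, gInvEs0,
    gInvEss, pdg00 hU ha hA hy, pdg0s, pdgs0, pdgss hU ha hA hy,
    Fin.succ_ne_zero, if_false]
  fin_cases k <;> fin_cases j <;>

    · simp only [Fin.zero_eta, Fin.mk_one, Fin.isValue, Fin.reduceEq, if_false, if_true,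
        reduceIte, Fin.reduceFinMk, Fin.succ_ne_zero, Fin.succ_inj]
      field_simp
      try ring

lemma chrkij (hU : IsOpen U) (ha : ContDiff ℝ (⊤ : ℕ∞) a) (hA : ContDiffOn ℝ (⊤ : ℕ∞) A U) (hy : y ∈ U)
    (hay : a (y 0) ≠ 0) (hF : 1 + 2*A y ≠ 0) (hG : 1 - 2*A y ≠ 0) (k i j : Fin 3) :
    Chr (flrwMet a A) k.succ i.succ j.succ y = (-(pd i.succ A y)*(if k = j then 1 else 0) - pd j.succ A y*(if k = i then 1 else 0) + pd k.succ A y*(if i = j then 1 else 0)) * (1-2*A y)⁻¹ := by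
  simp only [Chr, sum4, mginv_eq a A y hay hF hG, gInvE00, gInvE0s, gInvEs0,
    gInvEss, pdg00 hU ha hA hy, pdg0s, pdgs0, pdgss hU ha hA hy,
    Fin.succ_ne_zero, if_false]
  fin_cases k <;> fin_cases i <;> fin_cases j <;>

    · simp only [Fin.zero_eta, Fin.mk_one, Fin.isValue, Fin.reduceEq, if_false, if_true,
        reduceIte, Fin.reduceFinMk, Fin.succ_ne_zero, Fin.succ_inj]
      field_simp
      try ring


/-! ### derivatives of Christoffel symbols -/

section Pl
variable {U : Set Pt} {a : ℝ → ℝ} {A : SF} {x : Pt}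
variable (hU : IsOpen U) (ha : ContDiff ℝ (⊤ : ℕ∞) a) (hA : ContDiffOn ℝ (⊤ : ℕ∞) A U)
  (hapos : ∀ t, 0 < a t) (hA1 : ∀ y ∈ U, 0 < 1 + 2*A y) (hA2 : ∀ y ∈ U, 0 < 1 - 2*A y)
  (hx : x ∈ U)
include hU ha hA hapos hA1 hA2 hx

set_option linter.unusedSectionVars false

lemma P1 (k : Fin 3) : pd k.succ (Chr (flrwMet a A) k.succ 0 0) x
    = pd k.succ (pd k.succ A) x * (1-2*A x)⁻¹
      + 2 * (pd k.succ A x)^2 * ((1-2*A x)^2)⁻¹ := by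
  rw [pd_congr hU hx (fun y hy =>
    chrk00 hU ha hA hy (hapos (y 0)).ne' (hA1 y hy).ne' (hA2 y hy).ne' k) k.succ,
    pd_mul (diffAt_pd hU hA hx k.succ) ((dG hU hA hx).fun_inv (hA2 x hx).ne'),
    pd_inv (dG hU hA hx) (hA2 x hx).ne', pdG_ hU hA hx]
  ring

lemma P2 (k : Fin 3) : pd 0 (Chr (flrwMet a A) k.succ 0 k.succ) x
    = deriv (deriv a) (x 0) * (a (x 0))⁻¹ - (deriv a (x 0))^2 * ((a (x 0))^2)⁻¹
      - pd 0 (pd 0 A) x * (1-2*A x)⁻¹ - 2 * (pd 0 A x)^2 * ((1-2*A x)^2)⁻¹ := by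
  have key : ∀ y ∈ U, Chr (flrwMet a A) k.succ 0 k.succ y
      = deriv a (y 0) * (a (y 0))⁻¹ - pd 0 A y * (1-2*A y)⁻¹ := by
    intro y hy
    rw [chrk0j hU ha hA hy (hapos (y 0)).ne' (hA1 y hy).ne' (hA2 y hy).ne' k k]
    simp
  rw [pd_congr hU hx key 0,
    pd_sub (dw ha (hapos (x 0)).ne') ((diffAt_pd hU hA hx 0).fun_mul
      ((dG hU hA hx).fun_inv (hA2 x hx).ne')),
    pdw ha (hapos (x 0)).ne',
    pd_mul (diffAt_pd hU hA hx 0) ((dG hU hA hx).fun_inv (hA2 x hx).ne'),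
    pd_inv (dG hU hA hx) (hA2 x hx).ne', pdG_ hU hA hx]
  simp only [reduceIte]
  ring

lemma P3 (i : Fin 3) : pd 0 (Chr (flrwMet a A) 0 i.succ i.succ) x
    = ((deriv (deriv a) (x 0) * (a (x 0))⁻¹ - (deriv a (x 0))^2 * ((a (x 0))^2)⁻¹) * (1-2*A x)
        - 2 * (deriv a (x 0) * (a (x 0))⁻¹) * pd 0 A x - pd 0 (pd 0 A) x) * (1+2*A x)⁻¹
      - (deriv a (x 0) * (a (x 0))⁻¹ * (1-2*A x) - pd 0 A x) * (2 * pd 0 A x)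
        * ((1+2*A x)^2)⁻¹ := by
  have key : ∀ y ∈ U, Chr (flrwMet a A) 0 i.succ i.succ y
      = (deriv a (y 0) * (a (y 0))⁻¹ * (1-2*A y) - pd 0 A y) * (1+2*A y)⁻¹ := by
    intro y hy
    rw [chr0ij hU ha hA hy (hapos (y 0)).ne' (hA1 y hy).ne' (hA2 y hy).ne' i i]
    simp
  have d1 : DifferentiableAt ℝ (fun y : Pt => deriv a (y 0) * (a (y 0))⁻¹ * (1-2*A y)) x :=
    (dw ha (hapos (x 0)).ne').mul (dG hU hA hx)
  rw [pd_congr hU hx key 0,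
    pd_mul (d1.fun_sub (diffAt_pd hU hA hx 0)) ((dF hU hA hx).fun_inv (hA1 x hx).ne'),
    pd_sub d1 (diffAt_pd hU hA hx 0),
    pd_mul (dw ha (hapos (x 0)).ne') (dG hU hA hx),
    pdw ha (hapos (x 0)).ne', pdG_ hU hA hx,
    pd_inv (dF hU hA hx) (hA1 x hx).ne', pdF_ hU hA hx]
  simp only [reduceIte]
  ring

lemma P4 (i : Fin 3) : pd i.succ (Chr (flrwMet a A) 0 i.succ 0) x
    = pd i.succ (pd i.succ A) x * (1+2*A x)⁻¹
      - 2 * (pd i.succ A x)^2 * ((1+2*A x)^2)⁻¹ := by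
  rw [pd_congr hU hx (fun y hy =>
    chr0k0 hU ha hA hy (hapos (y 0)).ne' (hA1 y hy).ne' (hA2 y hy).ne' i) i.succ,
    pd_mul (diffAt_pd hU hA hx i.succ) ((dF hU hA hx).fun_inv (hA1 x hx).ne'),
    pd_inv (dF hU hA hx) (hA1 x hx).ne', pdF_ hU hA hx]
  ring

lemma P5 (k i : Fin 3) : pd k.succ (Chr (flrwMet a A) k.succ i.succ i.succ) x
    = ((-2) * (if k = i then 1 else 0) * pd k.succ (pd i.succ A) x
        + pd k.succ (pd k.succ A) x) * (1-2*A x)⁻¹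
      + ((-2) * (if k = i then 1 else 0) * pd i.succ A x + pd k.succ A x)
        * (2 * pd k.succ A x) * ((1-2*A x)^2)⁻¹ := by
  have key : ∀ y ∈ U, Chr (flrwMet a A) k.succ i.succ i.succ y
      = ((-2) * (if k = i then 1 else 0) * pd i.succ A y + pd k.succ A y)
          * (1-2*A y)⁻¹ := by
    intro y hy
    rw [chrkij hU ha hA hy (hapos (y 0)).ne' (hA1 y hy).ne' (hA2 y hy).ne' k i i]
    rcases eq_or_ne k i with h|h <;> simp [h] <;> ring
  have d1 : DifferentiableAt ℝ
      (fun y : Pt => (-2) * (if k = i then 1 else 0) * pd i.succ A y + pd k.succ A y) x :=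
    ((diffAt_pd hU hA hx i.succ).const_mul _).add (diffAt_pd hU hA hx k.succ)
  rw [pd_congr hU hx key k.succ,
    pd_mul d1 ((dG hU hA hx).fun_inv (hA2 x hx).ne'),
    pd_add ((diffAt_pd hU hA hx i.succ).const_mul _) (diffAt_pd hU hA hx k.succ),
    pd_cmul (diffAt_pd hU hA hx i.succ),
    pd_inv (dG hU hA hx) (hA2 x hx).ne', pdG_ hU hA hx]
  ring

lemma P6 (k i : Fin 3) : pd i.succ (Chr (flrwMet a A) k.succ i.succ k.succ) x
    = -(pd i.succ (pd i.succ A) x) * (1-2*A x)⁻¹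
      - 2 * (pd i.succ A x)^2 * ((1-2*A x)^2)⁻¹ := by
  have key : ∀ y ∈ U, Chr (flrwMet a A) k.succ i.succ k.succ y
      = -(pd i.succ A y) * (1-2*A y)⁻¹ := by
    intro y hy
    rw [chrkij hU ha hA hy (hapos (y 0)).ne' (hA1 y hy).ne' (hA2 y hy).ne' k i k]
    rcases eq_or_ne k i with h|h <;> simp [h, eq_comm] <;> ring
  rw [pd_congr hU hx key i.succ,
    pd_mul ((diffAt_pd hU hA hx i.succ).fun_neg) ((dG hU hA hx).fun_inv (hA2 x hx).ne'),
    pd_neg, pd_inv (dG hU hA hx) (hA2 x hx).ne', pdG_ hU hA hx]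
  ring

end Pl



/-! ### assembly -/

set_option maxHeartbeats 3000000 in
lemma keyAlg (al w wp B0 B1 B2 B3 C00 C11 C22 C33 C12 C13 C21 C23 C31 C32 F G : ℝ)
    (hal : al ≠ 0) (hF : F ≠ 0) (hG : G ≠ 0) :
    (((C11/G + 2*B1^2/G^2) - (wp - C00/G - 2*B0^2/G^2) + (w + B0/F)*((w - B0/G) * 1) - (B1/F)*(B1/G) + (B1/G)*((-B1*1 - B1*1 + B1*1)/G) - ((w - B0/G) * 1)*((w - B0/G) * 1) + (B2/G)*((-B2*1 - B1*0 + B1*0)/G) - ((w - B0/G) * 0)*((w - B0/G) * 0) + (B3/G)*((-B3*1 - B1*0 + B1*0)/G) - ((w - B0/G) * 0)*((w - B0/G) * 0)) + ((C22/G + 2*B2^2/G^2) - (wp - C00/G - 2*B0^2/G^2) + (w + B0/F)*((w - B0/G) * 1) - (B2/F)*(B2/G) + (B1/G)*((-B1*1 - B2*0 + B2*0)/G) - ((w - B0/G) * 0)*((w - B0/G) * 0) + (B2/G)*((-B2*1 - B2*1 + B2*1)/G) - ((w - B0/G) * 1)*((w - B0/G) * 1) + (B3/G)*((-B3*1 -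 B2*0 + B2*0)/G) - ((w - B0/G) * 0)*((w - B0/G) * 0)) + ((C33/G + 2*B3^2/G^2) - (wp - C00/G - 2*B0^2/G^2) + (w + B0/F)*((w - B0/G) * 1) - (B3/F)*(B3/G) + (B1/G)*((-B1*1 - B3*0 + B3*0)/G) - ((w - B0/G) * 0)*((w - B0/G) * 0) + (B2/G)*((-B2*1 - B3*0 + B3*0)/G) - ((w - B0/G) * 0)*((w - B0/G) * 0) + (B3/G)*((-B3*1 - B3*1 + B3*1)/G) - ((w - B0/G) * 1)*((w - B0/G) * 1))) - (1/2)*((-(al^2*F)⁻¹)*(((C11/G + 2*B1^2/G^2) - (wp - C00/G - 2*B0^2/G^2) + (w + B0/F)*((w - B0/G) * 1) - (B1/F)*(B1/G) + (B1/G)*((-B1*1 - B1*1 + B1*1)/G) - ((w - B0/G) * 1)*((w - B0/G) * 1) + (B2/G)*((-B2*1 - B1*0 + B1*0)/G) - ((w - B0/G) * 0)*((w - B0/G) * 0) + (B3/G)*((-B3*1 - B1*0 + B1*0)/G) - ((w - B0/G) * 0)*((w - B0/G) * 0)) + ((C22/G + 2*B2^2/G^2) - (wp - C00/G - 2*B0^2/G^2)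 + (w + B0/F)*((w - B0/G) * 1) - (B2/F)*(B2/G) + (B1/G)*((-B1*1 - B2*0 + B2*0)/G) - ((w - B0/G) * 0)*((w - B0/G) * 0) + (B2/G)*((-B2*1 - B2*1 + B2*1)/G) - ((w - B0/G) * 1)*((w - B0/G) * 1) + (B3/G)*((-B3*1 - B2*0 + B2*0)/G) - ((w - B0/G) * 0)*((w - B0/G) * 0)) + ((C33/G + 2*B3^2/G^2) - (wp - C00/G - 2*B0^2/G^2) + (w + B0/F)*((w - B0/G) * 1) - (B3/F)*(B3/G) + (B1/G)*((-B1*1 - B3*0 + B3*0)/G) - ((w - B0/G) * 0)*((w - B0/G) * 0) + (B2/G)*((-B2*1 - B3*0 + B3*0)/G) - ((w - B0/G) * 0)*((w - B0/G) * 0) + (B3/G)*((-B3*1 - B3*1 + B3*1)/G) - ((w - B0/G) * 1)*((w - B0/G) * 1))) + (al^2*G)⁻¹*(((((wp*G - 2*w*B0 - C00)/F - (w*G - B0)*2*B0/F^2) - (C11/F - 2*B1^2/F^2) + (((w*G - B0)/F) * 1)*(w + B0/F) - (B1/F)*(B1/F) + ((-B1*1 - B1*1 + B1*1)/G)*(B1/F)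 - ((w - B0/G) * 1)*(((w*G - B0)/F) * 1) + ((-B1*0 - B1*0 + B2*1)/G)*(B2/F) - ((w - B0/G) * 0)*(((w*G - B0)/F) * 0) + ((-B1*0 - B1*0 + B3*1)/G)*(B3/F) - ((w - B0/G) * 0)*(((w*G - B0)/F) * 0)) + (((-2*1*C11 + C11)/G + (-2*1*B1 + B1)*2*B1/G^2) - (-C11/G - 2*B1^2/G^2) + (((w*G - B0)/F) * 1)*((w - B0/G) * 1) - (((w*G - B0)/F) * 1)*((w - B0/G) * 1) + ((-B1*1 - B1*1 + B1*1)/G)*((-B1*1 - B1*1 + B1*1)/G) - ((-B1*1 - B1*1 + B1*1)/G)*((-B1*1 - B1*1 + B1*1)/G) + ((-B1*0 - B1*0 + B2*1)/G)*((-B2*1 - B1*0 + B1*0)/G) - ((-B1*0 - B1*0 + B2*1)/G)*((-B2*1 - B1*0 + B1*0)/G) + ((-B1*0 - B1*0 + B3*1)/G)*((-B3*1 - B1*0 + B1*0)/G) - ((-B1*0 - B1*0 + B3*1)/G)*((-B3*1 - B1*0 + B1*0)/G)) + (((-2*0*C21 + C22)/G + (-2*0*B1 + B2)*2*B2/G^2)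 - (-C11/G - 2*B1^2/G^2) + (((w*G - B0)/F) * 1)*((w - B0/G) * 1) - (((w*G - B0)/F) * 0)*((w - B0/G) * 0) + ((-B1*1 - B1*1 + B1*1)/G)*((-B1*1 - B2*0 + B2*0)/G) - ((-B1*0 - B2*1 + B1*0)/G)*((-B1*0 - B1*0 + B2*1)/G) + ((-B1*0 - B1*0 + B2*1)/G)*((-B2*1 - B2*1 + B2*1)/G) - ((-B1*1 - B2*0 + B2*0)/G)*((-B2*0 - B1*1 + B2*0)/G) + ((-B1*0 - B1*0 + B3*1)/G)*((-B3*1 - B2*0 + B2*0)/G) - ((-B1*0 - B2*0 + B3*0)/G)*((-B3*0 - B1*0 + B2*0)/G)) + (((-2*0*C31 + C33)/G + (-2*0*B1 + B3)*2*B3/G^2) - (-C11/G - 2*B1^2/G^2) + (((w*G - B0)/F) * 1)*((w - B0/G) * 1) - (((w*G - B0)/F) * 0)*((w - B0/G) * 0) + ((-B1*1 - B1*1 + B1*1)/G)*((-B1*1 - B3*0 + B3*0)/G) - ((-B1*0 - B3*1 + B1*0)/G)*((-B1*0 - B1*0 + B3*1)/G) + ((-B1*0 - B1*0 + B2*1)/G)*((-B2*1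 - B3*0 + B3*0)/G) - ((-B1*0 - B3*0 + B2*0)/G)*((-B2*0 - B1*0 + B3*0)/G) + ((-B1*0 - B1*0 + B3*1)/G)*((-B3*1 - B3*1 + B3*1)/G) - ((-B1*1 - B3*0 + B3*0)/G)*((-B3*0 - B1*1 + B3*0)/G))) + ((((wp*G - 2*w*B0 - C00)/F - (w*G - B0)*2*B0/F^2) - (C22/F - 2*B2^2/F^2) + (((w*G - B0)/F) * 1)*(w + B0/F) - (B2/F)*(B2/F) + ((-B2*0 - B2*0 + B1*1)/G)*(B1/F) - ((w - B0/G) * 0)*(((w*G - B0)/F) * 0) + ((-B2*1 - B2*1 + B2*1)/G)*(B2/F) - ((w - B0/G) * 1)*(((w*G - B0)/F) * 1) + ((-B2*0 - B2*0 + B3*1)/G)*(B3/F) - ((w - B0/G) * 0)*(((w*G - B0)/F) * 0)) + (((-2*0*C12 + C11)/G + (-2*0*B2 + B1)*2*B1/G^2) - (-C22/G - 2*B2^2/G^2) + (((w*G - B0)/F) * 1)*((w - B0/G) * 1) - (((w*G - B0)/F) * 0)*((w - B0/G) * 0) + ((-B2*0 - B2*0 + B1*1)/G)*((-B1*1 -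 B1*1 + B1*1)/G) - ((-B2*1 - B1*0 + B1*0)/G)*((-B1*0 - B2*1 + B1*0)/G) + ((-B2*1 - B2*1 + B2*1)/G)*((-B2*1 - B1*0 + B1*0)/G) - ((-B2*0 - B1*1 + B2*0)/G)*((-B2*0 - B2*0 + B1*1)/G) + ((-B2*0 - B2*0 + B3*1)/G)*((-B3*1 - B1*0 + B1*0)/G) - ((-B2*0 - B1*0 + B3*0)/G)*((-B3*0 - B2*0 + B1*0)/G)) + (((-2*1*C22 + C22)/G + (-2*1*B2 + B2)*2*B2/G^2) - (-C22/G - 2*B2^2/G^2) + (((w*G - B0)/F) * 1)*((w - B0/G) * 1) - (((w*G - B0)/F) * 1)*((w - B0/G) * 1) + ((-B2*0 - B2*0 + B1*1)/G)*((-B1*1 - B2*0 + B2*0)/G) - ((-B2*0 - B2*0 + B1*1)/G)*((-B1*1 - B2*0 + B2*0)/G) + ((-B2*1 - B2*1 + B2*1)/G)*((-B2*1 - B2*1 + B2*1)/G) - ((-B2*1 - B2*1 + B2*1)/G)*((-B2*1 - B2*1 + B2*1)/G) + ((-B2*0 - B2*0 + B3*1)/G)*((-B3*1 - B2*0 + B2*0)/G)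 - ((-B2*0 - B2*0 + B3*1)/G)*((-B3*1 - B2*0 + B2*0)/G)) + (((-2*0*C32 + C33)/G + (-2*0*B2 + B3)*2*B3/G^2) - (-C22/G - 2*B2^2/G^2) + (((w*G - B0)/F) * 1)*((w - B0/G) * 1) - (((w*G - B0)/F) * 0)*((w - B0/G) * 0) + ((-B2*0 - B2*0 + B1*1)/G)*((-B1*1 - B3*0 + B3*0)/G) - ((-B2*0 - B3*0 + B1*0)/G)*((-B1*0 - B2*0 + B3*0)/G) + ((-B2*1 - B2*1 + B2*1)/G)*((-B2*1 - B3*0 + B3*0)/G) - ((-B2*0 - B3*1 + B2*0)/G)*((-B2*0 - B2*0 + B3*1)/G) + ((-B2*0 - B2*0 + B3*1)/G)*((-B3*1 - B3*1 + B3*1)/G) - ((-B2*1 - B3*0 + B3*0)/G)*((-B3*0 - B2*1 + B3*0)/G))) + ((((wp*G - 2*w*B0 - C00)/F - (w*G - B0)*2*B0/F^2) - (C33/F - 2*B3^2/F^2) + (((w*G - B0)/F) * 1)*(w + B0/F) - (B3/F)*(B3/F) + ((-B3*0 - B3*0 + B1*1)/G)*(B1/F) - ((w - B0/G) * 0)*(((w*G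 - B0)/F) * 0) + ((-B3*0 - B3*0 + B2*1)/G)*(B2/F) - ((w - B0/G) * 0)*(((w*G - B0)/F) * 0) + ((-B3*1 - B3*1 + B3*1)/G)*(B3/F) - ((w - B0/G) * 1)*(((w*G - B0)/F) * 1)) + (((-2*0*C13 + C11)/G + (-2*0*B3 + B1)*2*B1/G^2) - (-C33/G - 2*B3^2/G^2) + (((w*G - B0)/F) * 1)*((w - B0/G) * 1) - (((w*G - B0)/F) * 0)*((w - B0/G) * 0) + ((-B3*0 - B3*0 + B1*1)/G)*((-B1*1 - B1*1 + B1*1)/G) - ((-B3*1 - B1*0 + B1*0)/G)*((-B1*0 - B3*1 + B1*0)/G) + ((-B3*0 - B3*0 + B2*1)/G)*((-B2*1 - B1*0 + B1*0)/G) - ((-B3*0 - B1*0 + B2*0)/G)*((-B2*0 - B3*0 + B1*0)/G) + ((-B3*1 - B3*1 + B3*1)/G)*((-B3*1 - B1*0 + B1*0)/G) - ((-B3*0 - B1*1 + B3*0)/G)*((-B3*0 - B3*0 + B1*1)/G)) + (((-2*0*C23 + C22)/G + (-2*0*B3 + B2)*2*B2/G^2) - (-C33/G - 2*B3^2/G^2)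 + (((w*G - B0)/F) * 1)*((w - B0/G) * 1) - (((w*G - B0)/F) * 0)*((w - B0/G) * 0) + ((-B3*0 - B3*0 + B1*1)/G)*((-B1*1 - B2*0 + B2*0)/G) - ((-B3*0 - B2*0 + B1*0)/G)*((-B1*0 - B3*0 + B2*0)/G) + ((-B3*0 - B3*0 + B2*1)/G)*((-B2*1 - B2*1 + B2*1)/G) - ((-B3*1 - B2*0 + B2*0)/G)*((-B2*0 - B3*1 + B2*0)/G) + ((-B3*1 - B3*1 + B3*1)/G)*((-B3*1 - B2*0 + B2*0)/G) - ((-B3*0 - B2*1 + B3*0)/G)*((-B3*0 - B3*0 + B2*1)/G)) + (((-2*1*C33 + C33)/G + (-2*1*B3 + B3)*2*B3/G^2) - (-C33/G - 2*B3^2/G^2) + (((w*G - B0)/F) * 1)*((w - B0/G) * 1) - (((w*G - B0)/F) * 1)*((w - B0/G) * 1) + ((-B3*0 - B3*0 + B1*1)/G)*((-B1*1 - B3*0 + B3*0)/G) - ((-B3*0 - B3*0 + B1*1)/G)*((-B1*1 - B3*0 + B3*0)/G) + ((-B3*0 - B3*0 + B2*1)/G)*((-B2*1 - B3*0 + B3*0)/G)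 - ((-B3*0 - B3*0 + B2*1)/G)*((-B2*1 - B3*0 + B3*0)/G) + ((-B3*1 - B3*1 + B3*1)/G)*((-B3*1 - B3*1 + B3*1)/G) - ((-B3*1 - B3*1 + B3*1)/G)*((-B3*1 - B3*1 + B3*1)/G)))))*(-(al^2*F)) = ((F/G^3) * ((3*B1^2 + 2*G*C11) + (3*B2^2 + 2*G*C22) + (3*B3^2 + 2*G*C33)) + 3*(w - B0/G)^2) := by
  field_simp
  ring

section main
variable {U : Set Pt} {a : ℝ → ℝ} {A : SF} {x : Pt}
variable (hU : IsOpen U) (ha : ContDiff ℝ (⊤ : ℕ∞) a) (hA : ContDiffOn ℝ (⊤ : ℕ∞) A U)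
  (hapos : ∀ t, 0 < a t) (hA1 : ∀ y ∈ U, 0 < 1 + 2*A y) (hA2 : ∀ y ∈ U, 0 < 1 - 2*A y)
  (hx : x ∈ U) (hay : a (x 0) ≠ 0) (hFne : 1 + 2*A x ≠ 0) (hGne : 1 - 2*A x ≠ 0)
lemma met00v : flrwMet a A 0 0 x = -(a (x 0)^2 * (1+2*A x)) := rfl

include hU ha hA hapos hA1 hA2 hx hay hFne hGne
set_option linter.unusedSectionVars false

set_option maxHeartbeats 1000000 in
lemma hR00 : Ricc (flrwMet a A) 0 0 x = ((((pd (Fin.succ 0) (pd (Fin.succ 0) A) x)/((1 - 2*A x)) + 2*(pd (Fin.succ 0) A x)^2/((1 - 2*A x))^2) - (((deriv (deriv a) (x 0) * (a (x 0))⁻¹ - (deriv a (x 0))^2 * ((a (x 0))^2)⁻¹)) - (pd 0 (pd 0 A) x)/((1 - 2*A x)) - 2*(pd 0 A x)^2/((1 - 2*A x))^2) + (((deriv a (x 0) * (a (x 0))⁻¹)) + (pd 0 A x)/((1 + 2*A x)))*((((deriv a (x 0) * (a (x 0))⁻¹)) - (pd 0 A x)/((1 - 2*A x))) * 1) - ((pd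 (Fin.succ 0) A x)/((1 + 2*A x)))*((pd (Fin.succ 0) A x)/((1 - 2*A x))) + ((pd (Fin.succ 0) A x)/((1 - 2*A x)))*((-(pd (Fin.succ 0) A x)*1 - (pd (Fin.succ 0) A x)*1 + (pd (Fin.succ 0) A x)*1)/((1 - 2*A x))) - ((((deriv a (x 0) * (a (x 0))⁻¹)) - (pd 0 A x)/((1 - 2*A x))) * 1)*((((deriv a (x 0) * (a (x 0))⁻¹)) - (pd 0 A x)/((1 - 2*A x))) * 1) + ((pd (Fin.succ 1) A x)/((1 - 2*A x)))*((-(pd (Fin.succ 1) A x)*1 - (pd (Fin.succ 0) A x)*0 + (pd (Fin.succ 0) A x)*0)/((1 - 2*A x))) - ((((deriv a (x 0) * (a (x 0))⁻¹)) - (pd 0 A x)/((1 - 2*A x))) * 0)*((((deriv a (x 0) * (a (x 0))⁻¹)) - (pd 0 A x)/((1 - 2*A x))) * 0) + ((pd (Fin.succ 2) A x)/((1 - 2*A x)))*((-(pd (Fin.succ 2) A x)*1 - (pd (Fin.succ 0) A x)*0 + (pd (Fin.succ 0) A x)*0)/((1 - 2*A x))) - ((((deriv a (x 0) * (a (x 0))⁻¹))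 - (pd 0 A x)/((1 - 2*A x))) * 0)*((((deriv a (x 0) * (a (x 0))⁻¹)) - (pd 0 A x)/((1 - 2*A x))) * 0)) + (((pd (Fin.succ 1) (pd (Fin.succ 1) A) x)/((1 - 2*A x)) + 2*(pd (Fin.succ 1) A x)^2/((1 - 2*A x))^2) - (((deriv (deriv a) (x 0) * (a (x 0))⁻¹ - (deriv a (x 0))^2 * ((a (x 0))^2)⁻¹)) - (pd 0 (pd 0 A) x)/((1 - 2*A x)) - 2*(pd 0 A x)^2/((1 - 2*A x))^2) + (((deriv a (x 0) * (a (x 0))⁻¹)) + (pd 0 A x)/((1 + 2*A x)))*((((deriv a (x 0) * (a (x 0))⁻¹)) - (pd 0 A x)/((1 - 2*A x))) * 1) - ((pd (Fin.succ 1) A x)/((1 + 2*A x)))*((pd (Fin.succ 1) A x)/((1 - 2*A x))) + ((pd (Fin.succ 0) A x)/((1 - 2*A x)))*((-(pd (Fin.succ 0) A x)*1 - (pd (Fin.succ 1) A x)*0 + (pd (Fin.succ 1) A x)*0)/((1 - 2*A x))) - ((((deriv a (x 0) * (a (x 0))⁻¹)) - (pd 0 A x)/((1 - 2*A x))) * 0)*((((deriv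 a (x 0) * (a (x 0))⁻¹)) - (pd 0 A x)/((1 - 2*A x))) * 0) + ((pd (Fin.succ 1) A x)/((1 - 2*A x)))*((-(pd (Fin.succ 1) A x)*1 - (pd (Fin.succ 1) A x)*1 + (pd (Fin.succ 1) A x)*1)/((1 - 2*A x))) - ((((deriv a (x 0) * (a (x 0))⁻¹)) - (pd 0 A x)/((1 - 2*A x))) * 1)*((((deriv a (x 0) * (a (x 0))⁻¹)) - (pd 0 A x)/((1 - 2*A x))) * 1) + ((pd (Fin.succ 2) A x)/((1 - 2*A x)))*((-(pd (Fin.succ 2) A x)*1 - (pd (Fin.succ 1) A x)*0 + (pd (Fin.succ 1) A x)*0)/((1 - 2*A x))) - ((((deriv a (x 0) * (a (x 0))⁻¹)) - (pd 0 A x)/((1 - 2*A x))) * 0)*((((deriv a (x 0) * (a (x 0))⁻¹)) - (pd 0 A x)/((1 - 2*A x))) * 0)) + (((pd (Fin.succ 2) (pd (Fin.succ 2) A) x)/((1 - 2*A x)) + 2*(pd (Fin.succ 2) A x)^2/((1 - 2*A x))^2) - (((deriv (deriv a) (x 0) * (a (x 0))⁻¹ - (deriv a (x 0))^2 * ((a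 (x 0))^2)⁻¹)) - (pd 0 (pd 0 A) x)/((1 - 2*A x)) - 2*(pd 0 A x)^2/((1 - 2*A x))^2) + (((deriv a (x 0) * (a (x 0))⁻¹)) + (pd 0 A x)/((1 + 2*A x)))*((((deriv a (x 0) * (a (x 0))⁻¹)) - (pd 0 A x)/((1 - 2*A x))) * 1) - ((pd (Fin.succ 2) A x)/((1 + 2*A x)))*((pd (Fin.succ 2) A x)/((1 - 2*A x))) + ((pd (Fin.succ 0) A x)/((1 - 2*A x)))*((-(pd (Fin.succ 0) A x)*1 - (pd (Fin.succ 2) A x)*0 + (pd (Fin.succ 2) A x)*0)/((1 - 2*A x))) - ((((deriv a (x 0) * (a (x 0))⁻¹)) - (pd 0 A x)/((1 - 2*A x))) * 0)*((((deriv a (x 0) * (a (x 0))⁻¹)) - (pd 0 A x)/((1 - 2*A x))) * 0) + ((pd (Fin.succ 1) A x)/((1 - 2*A x)))*((-(pd (Fin.succ 1) A x)*1 - (pd (Fin.succ 2) A x)*0 + (pd (Fin.succ 2) A x)*0)/((1 - 2*A x))) - ((((deriv a (x 0) * (a (x 0))⁻¹)) - (pd 0 A x)/((1 - 2*A x)))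 * 0)*((((deriv a (x 0) * (a (x 0))⁻¹)) - (pd 0 A x)/((1 - 2*A x))) * 0) + ((pd (Fin.succ 2) A x)/((1 - 2*A x)))*((-(pd (Fin.succ 2) A x)*1 - (pd (Fin.succ 2) A x)*1 + (pd (Fin.succ 2) A x)*1)/((1 - 2*A x))) - ((((deriv a (x 0) * (a (x 0))⁻¹)) - (pd 0 A x)/((1 - 2*A x))) * 1)*((((deriv a (x 0) * (a (x 0))⁻¹)) - (pd 0 A x)/((1 - 2*A x))) * 1))) := by
  simp only [Ricc, Riem, sum4,
    chr000 hU ha hA hx hay hFne hGne, chr00k hU ha hA hx hay hFne hGne,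
    chr0k0 hU ha hA hx hay hFne hGne, chr0ij hU ha hA hx hay hFne hGne,
    chrk0j hU ha hA hx hay hFne hGne, chrkj0 hU ha hA hx hay hFne hGne,
    chrk00 hU ha hA hx hay hFne hGne, chrkij hU ha hA hx hay hFne hGne,
    P1 hU ha hA hapos hA1 hA2 hx, P2 hU ha hA hapos hA1 hA2 hx,
    P3 hU ha hA hapos hA1 hA2 hx, P4 hU ha hA hapos hA1 hA2 hx,
    P5 hU ha hA hapos hA1 hA2 hx, P6 hU ha hA hapos hA1 hA2 hx,
    Fin.reduceEq, reduceIte]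
  ring

set_option maxHeartbeats 1000000 in
lemma hR11 : Ricc (flrwMet a A) (Fin.succ 0) (Fin.succ 0) x = ((((((deriv (deriv a) (x 0) * (a (x 0))⁻¹ - (deriv a (x 0))^2 * ((a (x 0))^2)⁻¹))*((1 - 2*A x)) - 2*((deriv a (x 0) * (a (x 0))⁻¹))*(pd 0 A x) - (pd 0 (pd 0 A) x))/((1 + 2*A x)) - (((deriv a (x 0) * (a (x 0))⁻¹))*((1 - 2*A x)) - (pd 0 A x))*2*(pd 0 A x)/((1 + 2*A x))^2) - ((pd (Fin.succ 0) (pd (Fin.succ 0) A) x)/((1 + 2*A x)) - 2*(pd (Fin.succ 0) A x)^2/((1 + 2*A x))^2) + (((((deriv a (x 0) * (a (x 0))⁻¹))*((1 - 2*A x)) - (pd 0 A x))/((1 + 2*A x))) * 1)*(((deriv a (x 0) * (a (x 0))⁻¹)) + (pd 0 A x)/((1 + 2*A x))) - ((pd (Fin.succ 0) A x)/((1 + 2*A x)))*((pd (Fin.succ 0) A x)/((1 + 2*A x))) + ((-(pd (Fin.succ 0) A x)*1 - (pd (Fin.succ 0) A x)*1 + (pd (Fin.succ 0) A x)*1)/((1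 - 2*A x)))*((pd (Fin.succ 0) A x)/((1 + 2*A x))) - ((((deriv a (x 0) * (a (x 0))⁻¹)) - (pd 0 A x)/((1 - 2*A x))) * 1)*(((((deriv a (x 0) * (a (x 0))⁻¹))*((1 - 2*A x)) - (pd 0 A x))/((1 + 2*A x))) * 1) + ((-(pd (Fin.succ 0) A x)*0 - (pd (Fin.succ 0) A x)*0 + (pd (Fin.succ 1) A x)*1)/((1 - 2*A x)))*((pd (Fin.succ 1) A x)/((1 + 2*A x))) - ((((deriv a (x 0) * (a (x 0))⁻¹)) - (pd 0 A x)/((1 - 2*A x))) * 0)*(((((deriv a (x 0) * (a (x 0))⁻¹))*((1 - 2*A x)) - (pd 0 A x))/((1 + 2*A x))) * 0) + ((-(pd (Fin.succ 0) A x)*0 - (pd (Fin.succ 0) A x)*0 + (pd (Fin.succ 2) A x)*1)/((1 - 2*A x)))*((pd (Fin.succ 2) A x)/((1 + 2*A x))) - ((((deriv a (x 0) * (a (x 0))⁻¹)) - (pd 0 A x)/((1 - 2*A x))) * 0)*(((((deriv a (x 0) * (a (x 0))⁻¹))*((1 - 2*A x)) - (pd 0 A x))/((1 + 2*A x))) *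 0)) + (((-2*1*(pd (Fin.succ 0) (pd (Fin.succ 0) A) x) + (pd (Fin.succ 0) (pd (Fin.succ 0) A) x))/((1 - 2*A x)) + (-2*1*(pd (Fin.succ 0) A x) + (pd (Fin.succ 0) A x))*2*(pd (Fin.succ 0) A x)/((1 - 2*A x))^2) - (-(pd (Fin.succ 0) (pd (Fin.succ 0) A) x)/((1 - 2*A x)) - 2*(pd (Fin.succ 0) A x)^2/((1 - 2*A x))^2) + (((((deriv a (x 0) * (a (x 0))⁻¹))*((1 - 2*A x)) - (pd 0 A x))/((1 + 2*A x))) * 1)*((((deriv a (x 0) * (a (x 0))⁻¹)) - (pd 0 A x)/((1 - 2*A x))) * 1) - (((((deriv a (x 0) * (a (x 0))⁻¹))*((1 - 2*A x)) - (pd 0 A x))/((1 + 2*A x))) * 1)*((((deriv a (x 0) * (a (x 0))⁻¹)) - (pd 0 A x)/((1 - 2*A x))) * 1) + ((-(pd (Fin.succ 0) A x)*1 - (pd (Fin.succ 0) A x)*1 + (pd (Fin.succ 0) A x)*1)/((1 - 2*A x)))*((-(pd (Fin.succ 0) A x)*1 - (pd (Fin.succ 0) A x)*1 + (pd (Fin.succ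 0) A x)*1)/((1 - 2*A x))) - ((-(pd (Fin.succ 0) A x)*1 - (pd (Fin.succ 0) A x)*1 + (pd (Fin.succ 0) A x)*1)/((1 - 2*A x)))*((-(pd (Fin.succ 0) A x)*1 - (pd (Fin.succ 0) A x)*1 + (pd (Fin.succ 0) A x)*1)/((1 - 2*A x))) + ((-(pd (Fin.succ 0) A x)*0 - (pd (Fin.succ 0) A x)*0 + (pd (Fin.succ 1) A x)*1)/((1 - 2*A x)))*((-(pd (Fin.succ 1) A x)*1 - (pd (Fin.succ 0) A x)*0 + (pd (Fin.succ 0) A x)*0)/((1 - 2*A x))) - ((-(pd (Fin.succ 0) A x)*0 - (pd (Fin.succ 0) A x)*0 + (pd (Fin.succ 1) A x)*1)/((1 - 2*A x)))*((-(pd (Fin.succ 1) A x)*1 - (pd (Fin.succ 0) A x)*0 + (pd (Fin.succ 0) A x)*0)/((1 - 2*A x))) + ((-(pd (Fin.succ 0) A x)*0 - (pd (Fin.succ 0) A x)*0 + (pd (Fin.succ 2) A x)*1)/((1 - 2*A x)))*((-(pd (Fin.succ 2) A x)*1 - (pd (Fin.succ 0) A x)*0 + (pd (Fin.succ 0) A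 x)*0)/((1 - 2*A x))) - ((-(pd (Fin.succ 0) A x)*0 - (pd (Fin.succ 0) A x)*0 + (pd (Fin.succ 2) A x)*1)/((1 - 2*A x)))*((-(pd (Fin.succ 2) A x)*1 - (pd (Fin.succ 0) A x)*0 + (pd (Fin.succ 0) A x)*0)/((1 - 2*A x)))) + (((-2*0*(pd (Fin.succ 1) (pd (Fin.succ 0) A) x) + (pd (Fin.succ 1) (pd (Fin.succ 1) A) x))/((1 - 2*A x)) + (-2*0*(pd (Fin.succ 0) A x) + (pd (Fin.succ 1) A x))*2*(pd (Fin.succ 1) A x)/((1 - 2*A x))^2) - (-(pd (Fin.succ 0) (pd (Fin.succ 0) A) x)/((1 - 2*A x)) - 2*(pd (Fin.succ 0) A x)^2/((1 - 2*A x))^2) + (((((deriv a (x 0) * (a (x 0))⁻¹))*((1 - 2*A x)) - (pd 0 A x))/((1 + 2*A x))) * 1)*((((deriv a (x 0) * (a (x 0))⁻¹)) - (pd 0 A x)/((1 - 2*A x))) * 1) - (((((deriv a (x 0) * (a (x 0))⁻¹))*((1 - 2*A x)) - (pd 0 A x))/((1 + 2*A x))) * 0)*((((deriv a (x 0) * (a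 (x 0))⁻¹)) - (pd 0 A x)/((1 - 2*A x))) * 0) + ((-(pd (Fin.succ 0) A x)*1 - (pd (Fin.succ 0) A x)*1 + (pd (Fin.succ 0) A x)*1)/((1 - 2*A x)))*((-(pd (Fin.succ 0) A x)*1 - (pd (Fin.succ 1) A x)*0 + (pd (Fin.succ 1) A x)*0)/((1 - 2*A x))) - ((-(pd (Fin.succ 0) A x)*0 - (pd (Fin.succ 1) A x)*1 + (pd (Fin.succ 0) A x)*0)/((1 - 2*A x)))*((-(pd (Fin.succ 0) A x)*0 - (pd (Fin.succ 0) A x)*0 + (pd (Fin.succ 1) A x)*1)/((1 - 2*A x))) + ((-(pd (Fin.succ 0) A x)*0 - (pd (Fin.succ 0) A x)*0 + (pd (Fin.succ 1) A x)*1)/((1 - 2*A x)))*((-(pd (Fin.succ 1) A x)*1 - (pd (Fin.succ 1) A x)*1 + (pd (Fin.succ 1) A x)*1)/((1 - 2*A x))) - ((-(pd (Fin.succ 0) A x)*1 - (pd (Fin.succ 1) A x)*0 + (pd (Fin.succ 1) A x)*0)/((1 - 2*A x)))*((-(pd (Fin.succ 1) A x)*0 - (pd (Fin.succ 0) A x)*1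 + (pd (Fin.succ 1) A x)*0)/((1 - 2*A x))) + ((-(pd (Fin.succ 0) A x)*0 - (pd (Fin.succ 0) A x)*0 + (pd (Fin.succ 2) A x)*1)/((1 - 2*A x)))*((-(pd (Fin.succ 2) A x)*1 - (pd (Fin.succ 1) A x)*0 + (pd (Fin.succ 1) A x)*0)/((1 - 2*A x))) - ((-(pd (Fin.succ 0) A x)*0 - (pd (Fin.succ 1) A x)*0 + (pd (Fin.succ 2) A x)*0)/((1 - 2*A x)))*((-(pd (Fin.succ 2) A x)*0 - (pd (Fin.succ 0) A x)*0 + (pd (Fin.succ 1) A x)*0)/((1 - 2*A x)))) + (((-2*0*(pd (Fin.succ 2) (pd (Fin.succ 0) A) x) + (pd (Fin.succ 2) (pd (Fin.succ 2) A) x))/((1 - 2*A x)) + (-2*0*(pd (Fin.succ 0) A x) + (pd (Fin.succ 2) A x))*2*(pd (Fin.succ 2) A x)/((1 - 2*A x))^2) - (-(pd (Fin.succ 0) (pd (Fin.succ 0) A) x)/((1 - 2*A x)) - 2*(pd (Fin.succ 0) A x)^2/((1 - 2*A x))^2) + (((((deriv a (x 0) * (a (x 0))⁻¹))*((1 - 2*A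 x)) - (pd 0 A x))/((1 + 2*A x))) * 1)*((((deriv a (x 0) * (a (x 0))⁻¹)) - (pd 0 A x)/((1 - 2*A x))) * 1) - (((((deriv a (x 0) * (a (x 0))⁻¹))*((1 - 2*A x)) - (pd 0 A x))/((1 + 2*A x))) * 0)*((((deriv a (x 0) * (a (x 0))⁻¹)) - (pd 0 A x)/((1 - 2*A x))) * 0) + ((-(pd (Fin.succ 0) A x)*1 - (pd (Fin.succ 0) A x)*1 + (pd (Fin.succ 0) A x)*1)/((1 - 2*A x)))*((-(pd (Fin.succ 0) A x)*1 - (pd (Fin.succ 2) A x)*0 + (pd (Fin.succ 2) A x)*0)/((1 - 2*A x))) - ((-(pd (Fin.succ 0) A x)*0 - (pd (Fin.succ 2) A x)*1 + (pd (Fin.succ 0) A x)*0)/((1 - 2*A x)))*((-(pd (Fin.succ 0) A x)*0 - (pd (Fin.succ 0) A x)*0 + (pd (Fin.succ 2) A x)*1)/((1 - 2*A x))) + ((-(pd (Fin.succ 0) A x)*0 - (pd (Fin.succ 0) A x)*0 + (pd (Fin.succ 1) A x)*1)/((1 - 2*A x)))*((-(pd (Fin.succ 1) A x)*1 - (pd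 (Fin.succ 2) A x)*0 + (pd (Fin.succ 2) A x)*0)/((1 - 2*A x))) - ((-(pd (Fin.succ 0) A x)*0 - (pd (Fin.succ 2) A x)*0 + (pd (Fin.succ 1) A x)*0)/((1 - 2*A x)))*((-(pd (Fin.succ 1) A x)*0 - (pd (Fin.succ 0) A x)*0 + (pd (Fin.succ 2) A x)*0)/((1 - 2*A x))) + ((-(pd (Fin.succ 0) A x)*0 - (pd (Fin.succ 0) A x)*0 + (pd (Fin.succ 2) A x)*1)/((1 - 2*A x)))*((-(pd (Fin.succ 2) A x)*1 - (pd (Fin.succ 2) A x)*1 + (pd (Fin.succ 2) A x)*1)/((1 - 2*A x))) - ((-(pd (Fin.succ 0) A x)*1 - (pd (Fin.succ 2) A x)*0 + (pd (Fin.succ 2) A x)*0)/((1 - 2*A x)))*((-(pd (Fin.succ 2) A x)*0 - (pd (Fin.succ 0) A x)*1 + (pd (Fin.succ 2) A x)*0)/((1 - 2*A x))))) := by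
  simp only [Ricc, Riem, sum4,
    chr000 hU ha hA hx hay hFne hGne, chr00k hU ha hA hx hay hFne hGne,
    chr0k0 hU ha hA hx hay hFne hGne, chr0ij hU ha hA hx hay hFne hGne,
    chrk0j hU ha hA hx hay hFne hGne, chrkj0 hU ha hA hx hay hFne hGne,
    chrk00 hU ha hA hx hay hFne hGne, chrkij hU ha hA hx hay hFne hGne,
    P1 hU ha hA hapos hA1 hA2 hx, P2 hU ha hA hapos hA1 hA2 hx,
    P3 hU ha hA hapos hA1 hA2 hx, P4 hU ha hA hapos hA1 hA2 hx,
    P5 hU ha hA hapos hA1 hA2 hx, P6 hU ha hA hapos hA1 hA2 hx,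
    Fin.reduceEq, reduceIte]
  ring

set_option maxHeartbeats 1000000 in
lemma hR22 : Ricc (flrwMet a A) (Fin.succ 1) (Fin.succ 1) x = ((((((deriv (deriv a) (x 0) * (a (x 0))⁻¹ - (deriv a (x 0))^2 * ((a (x 0))^2)⁻¹))*((1 - 2*A x)) - 2*((deriv a (x 0) * (a (x 0))⁻¹))*(pd 0 A x) - (pd 0 (pd 0 A) x))/((1 + 2*A x)) - (((deriv a (x 0) * (a (x 0))⁻¹))*((1 - 2*A x)) - (pd 0 A x))*2*(pd 0 A x)/((1 + 2*A x))^2) - ((pd (Fin.succ 1) (pd (Fin.succ 1) A) x)/((1 + 2*A x)) - 2*(pd (Fin.succ 1) A x)^2/((1 + 2*A x))^2) + (((((deriv a (x 0) * (a (x 0))⁻¹))*((1 - 2*A x)) - (pd 0 A x))/((1 + 2*A x))) * 1)*(((deriv a (x 0) * (a (x 0))⁻¹)) + (pd 0 A x)/((1 + 2*A x))) - ((pd (Fin.succ 1) A x)/((1 + 2*A x)))*((pd (Fin.succ 1) A x)/((1 + 2*A x))) + ((-(pd (Fin.succ 1) A x)*0 - (pd (Fin.succ 1) A x)*0 + (pd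 (Fin.succ 0) A x)*1)/((1 - 2*A x)))*((pd (Fin.succ 0) A x)/((1 + 2*A x))) - ((((deriv a (x 0) * (a (x 0))⁻¹)) - (pd 0 A x)/((1 - 2*A x))) * 0)*(((((deriv a (x 0) * (a (x 0))⁻¹))*((1 - 2*A x)) - (pd 0 A x))/((1 + 2*A x))) * 0) + ((-(pd (Fin.succ 1) A x)*1 - (pd (Fin.succ 1) A x)*1 + (pd (Fin.succ 1) A x)*1)/((1 - 2*A x)))*((pd (Fin.succ 1) A x)/((1 + 2*A x))) - ((((deriv a (x 0) * (a (x 0))⁻¹)) - (pd 0 A x)/((1 - 2*A x))) * 1)*(((((deriv a (x 0) * (a (x 0))⁻¹))*((1 - 2*A x)) - (pd 0 A x))/((1 + 2*A x))) * 1) + ((-(pd (Fin.succ 1) A x)*0 - (pd (Fin.succ 1) A x)*0 + (pd (Fin.succ 2) A x)*1)/((1 - 2*A x)))*((pd (Fin.succ 2) A x)/((1 + 2*A x))) - ((((deriv a (x 0) * (a (x 0))⁻¹)) - (pd 0 A x)/((1 - 2*A x))) * 0)*(((((deriv a (x 0) * (a (x 0))⁻¹))*((1 - 2*A x)) - (pd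 0 A x))/((1 + 2*A x))) * 0)) + (((-2*0*(pd (Fin.succ 0) (pd (Fin.succ 1) A) x) + (pd (Fin.succ 0) (pd (Fin.succ 0) A) x))/((1 - 2*A x)) + (-2*0*(pd (Fin.succ 1) A x) + (pd (Fin.succ 0) A x))*2*(pd (Fin.succ 0) A x)/((1 - 2*A x))^2) - (-(pd (Fin.succ 1) (pd (Fin.succ 1) A) x)/((1 - 2*A x)) - 2*(pd (Fin.succ 1) A x)^2/((1 - 2*A x))^2) + (((((deriv a (x 0) * (a (x 0))⁻¹))*((1 - 2*A x)) - (pd 0 A x))/((1 + 2*A x))) * 1)*((((deriv a (x 0) * (a (x 0))⁻¹)) - (pd 0 A x)/((1 - 2*A x))) * 1) - (((((deriv a (x 0) * (a (x 0))⁻¹))*((1 - 2*A x)) - (pd 0 A x))/((1 + 2*A x))) * 0)*((((deriv a (x 0) * (a (x 0))⁻¹)) - (pd 0 A x)/((1 - 2*A x))) * 0) + ((-(pd (Fin.succ 1) A x)*0 - (pd (Fin.succ 1) A x)*0 + (pd (Fin.succ 0) A x)*1)/((1 - 2*A x)))*((-(pd (Fin.succ 0) A x)*1 - (pd (Fin.succ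 0) A x)*1 + (pd (Fin.succ 0) A x)*1)/((1 - 2*A x))) - ((-(pd (Fin.succ 1) A x)*1 - (pd (Fin.succ 0) A x)*0 + (pd (Fin.succ 0) A x)*0)/((1 - 2*A x)))*((-(pd (Fin.succ 0) A x)*0 - (pd (Fin.succ 1) A x)*1 + (pd (Fin.succ 0) A x)*0)/((1 - 2*A x))) + ((-(pd (Fin.succ 1) A x)*1 - (pd (Fin.succ 1) A x)*1 + (pd (Fin.succ 1) A x)*1)/((1 - 2*A x)))*((-(pd (Fin.succ 1) A x)*1 - (pd (Fin.succ 0) A x)*0 + (pd (Fin.succ 0) A x)*0)/((1 - 2*A x))) - ((-(pd (Fin.succ 1) A x)*0 - (pd (Fin.succ 0) A x)*1 + (pd (Fin.succ 1) A x)*0)/((1 - 2*A x)))*((-(pd (Fin.succ 1) A x)*0 - (pd (Fin.succ 1) A x)*0 + (pd (Fin.succ 0) A x)*1)/((1 - 2*A x))) + ((-(pd (Fin.succ 1) A x)*0 - (pd (Fin.succ 1) A x)*0 + (pd (Fin.succ 2) A x)*1)/((1 - 2*A x)))*((-(pd (Fin.succ 2) A x)*1 - (pd (Fin.succ 0) A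 x)*0 + (pd (Fin.succ 0) A x)*0)/((1 - 2*A x))) - ((-(pd (Fin.succ 1) A x)*0 - (pd (Fin.succ 0) A x)*0 + (pd (Fin.succ 2) A x)*0)/((1 - 2*A x)))*((-(pd (Fin.succ 2) A x)*0 - (pd (Fin.succ 1) A x)*0 + (pd (Fin.succ 0) A x)*0)/((1 - 2*A x)))) + (((-2*1*(pd (Fin.succ 1) (pd (Fin.succ 1) A) x) + (pd (Fin.succ 1) (pd (Fin.succ 1) A) x))/((1 - 2*A x)) + (-2*1*(pd (Fin.succ 1) A x) + (pd (Fin.succ 1) A x))*2*(pd (Fin.succ 1) A x)/((1 - 2*A x))^2) - (-(pd (Fin.succ 1) (pd (Fin.succ 1) A) x)/((1 - 2*A x)) - 2*(pd (Fin.succ 1) A x)^2/((1 - 2*A x))^2) + (((((deriv a (x 0) * (a (x 0))⁻¹))*((1 - 2*A x)) - (pd 0 A x))/((1 + 2*A x))) * 1)*((((deriv a (x 0) * (a (x 0))⁻¹)) - (pd 0 A x)/((1 - 2*A x))) * 1) - (((((deriv a (x 0) * (a (x 0))⁻¹))*((1 - 2*A x)) - (pd 0 A x))/((1 + 2*A x)))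 * 1)*((((deriv a (x 0) * (a (x 0))⁻¹)) - (pd 0 A x)/((1 - 2*A x))) * 1) + ((-(pd (Fin.succ 1) A x)*0 - (pd (Fin.succ 1) A x)*0 + (pd (Fin.succ 0) A x)*1)/((1 - 2*A x)))*((-(pd (Fin.succ 0) A x)*1 - (pd (Fin.succ 1) A x)*0 + (pd (Fin.succ 1) A x)*0)/((1 - 2*A x))) - ((-(pd (Fin.succ 1) A x)*0 - (pd (Fin.succ 1) A x)*0 + (pd (Fin.succ 0) A x)*1)/((1 - 2*A x)))*((-(pd (Fin.succ 0) A x)*1 - (pd (Fin.succ 1) A x)*0 + (pd (Fin.succ 1) A x)*0)/((1 - 2*A x))) + ((-(pd (Fin.succ 1) A x)*1 - (pd (Fin.succ 1) A x)*1 + (pd (Fin.succ 1) A x)*1)/((1 - 2*A x)))*((-(pd (Fin.succ 1) A x)*1 - (pd (Fin.succ 1) A x)*1 + (pd (Fin.succ 1) A x)*1)/((1 - 2*A x))) - ((-(pd (Fin.succ 1) A x)*1 - (pd (Fin.succ 1) A x)*1 + (pd (Fin.succ 1) A x)*1)/((1 - 2*A x)))*((-(pd (Fin.succ 1) A x)*1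 - (pd (Fin.succ 1) A x)*1 + (pd (Fin.succ 1) A x)*1)/((1 - 2*A x))) + ((-(pd (Fin.succ 1) A x)*0 - (pd (Fin.succ 1) A x)*0 + (pd (Fin.succ 2) A x)*1)/((1 - 2*A x)))*((-(pd (Fin.succ 2) A x)*1 - (pd (Fin.succ 1) A x)*0 + (pd (Fin.succ 1) A x)*0)/((1 - 2*A x))) - ((-(pd (Fin.succ 1) A x)*0 - (pd (Fin.succ 1) A x)*0 + (pd (Fin.succ 2) A x)*1)/((1 - 2*A x)))*((-(pd (Fin.succ 2) A x)*1 - (pd (Fin.succ 1) A x)*0 + (pd (Fin.succ 1) A x)*0)/((1 - 2*A x)))) + (((-2*0*(pd (Fin.succ 2) (pd (Fin.succ 1) A) x) + (pd (Fin.succ 2) (pd (Fin.succ 2) A) x))/((1 - 2*A x)) + (-2*0*(pd (Fin.succ 1) A x) + (pd (Fin.succ 2) A x))*2*(pd (Fin.succ 2) A x)/((1 - 2*A x))^2) - (-(pd (Fin.succ 1) (pd (Fin.succ 1) A) x)/((1 - 2*A x)) - 2*(pd (Fin.succ 1) A x)^2/((1 - 2*A x))^2) + (((((deriv a (x 0)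 * (a (x 0))⁻¹))*((1 - 2*A x)) - (pd 0 A x))/((1 + 2*A x))) * 1)*((((deriv a (x 0) * (a (x 0))⁻¹)) - (pd 0 A x)/((1 - 2*A x))) * 1) - (((((deriv a (x 0) * (a (x 0))⁻¹))*((1 - 2*A x)) - (pd 0 A x))/((1 + 2*A x))) * 0)*((((deriv a (x 0) * (a (x 0))⁻¹)) - (pd 0 A x)/((1 - 2*A x))) * 0) + ((-(pd (Fin.succ 1) A x)*0 - (pd (Fin.succ 1) A x)*0 + (pd (Fin.succ 0) A x)*1)/((1 - 2*A x)))*((-(pd (Fin.succ 0) A x)*1 - (pd (Fin.succ 2) A x)*0 + (pd (Fin.succ 2) A x)*0)/((1 - 2*A x))) - ((-(pd (Fin.succ 1) A x)*0 - (pd (Fin.succ 2) A x)*0 + (pd (Fin.succ 0) A x)*0)/((1 - 2*A x)))*((-(pd (Fin.succ 0) A x)*0 - (pd (Fin.succ 1) A x)*0 + (pd (Fin.succ 2) A x)*0)/((1 - 2*A x))) + ((-(pd (Fin.succ 1) A x)*1 - (pd (Fin.succ 1) A x)*1 + (pd (Fin.succ 1) A x)*1)/((1 - 2*A x)))*((-(pd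 (Fin.succ 1) A x)*1 - (pd (Fin.succ 2) A x)*0 + (pd (Fin.succ 2) A x)*0)/((1 - 2*A x))) - ((-(pd (Fin.succ 1) A x)*0 - (pd (Fin.succ 2) A x)*1 + (pd (Fin.succ 1) A x)*0)/((1 - 2*A x)))*((-(pd (Fin.succ 1) A x)*0 - (pd (Fin.succ 1) A x)*0 + (pd (Fin.succ 2) A x)*1)/((1 - 2*A x))) + ((-(pd (Fin.succ 1) A x)*0 - (pd (Fin.succ 1) A x)*0 + (pd (Fin.succ 2) A x)*1)/((1 - 2*A x)))*((-(pd (Fin.succ 2) A x)*1 - (pd (Fin.succ 2) A x)*1 + (pd (Fin.succ 2) A x)*1)/((1 - 2*A x))) - ((-(pd (Fin.succ 1) A x)*1 - (pd (Fin.succ 2) A x)*0 + (pd (Fin.succ 2) A x)*0)/((1 - 2*A x)))*((-(pd (Fin.succ 2) A x)*0 - (pd (Fin.succ 1) A x)*1 + (pd (Fin.succ 2) A x)*0)/((1 - 2*A x))))) := by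
  simp only [Ricc, Riem, sum4,
    chr000 hU ha hA hx hay hFne hGne, chr00k hU ha hA hx hay hFne hGne,
    chr0k0 hU ha hA hx hay hFne hGne, chr0ij hU ha hA hx hay hFne hGne,
    chrk0j hU ha hA hx hay hFne hGne, chrkj0 hU ha hA hx hay hFne hGne,
    chrk00 hU ha hA hx hay hFne hGne, chrkij hU ha hA hx hay hFne hGne,
    P1 hU ha hA hapos hA1 hA2 hx, P2 hU ha hA hapos hA1 hA2 hx,
    P3 hU ha hA hapos hA1 hA2 hx, P4 hU ha hA hapos hA1 hA2 hx,
    P5 hU ha hA hapos hA1 hA2 hx, P6 hU ha hA hapos hA1 hA2 hx,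
    Fin.reduceEq, reduceIte]
  ring

set_option maxHeartbeats 1000000 in
lemma hR33 : Ricc (flrwMet a A) (Fin.succ 2) (Fin.succ 2) x = ((((((deriv (deriv a) (x 0) * (a (x 0))⁻¹ - (deriv a (x 0))^2 * ((a (x 0))^2)⁻¹))*((1 - 2*A x)) - 2*((deriv a (x 0) * (a (x 0))⁻¹))*(pd 0 A x) - (pd 0 (pd 0 A) x))/((1 + 2*A x)) - (((deriv a (x 0) * (a (x 0))⁻¹))*((1 - 2*A x)) - (pd 0 A x))*2*(pd 0 A x)/((1 + 2*A x))^2) - ((pd (Fin.succ 2) (pd (Fin.succ 2) A) x)/((1 + 2*A x)) - 2*(pd (Fin.succ 2) A x)^2/((1 + 2*A x))^2) + (((((deriv a (x 0) * (a (x 0))⁻¹))*((1 - 2*A x)) - (pd 0 A x))/((1 + 2*A x))) * 1)*(((deriv a (x 0) * (a (x 0))⁻¹)) + (pd 0 A x)/((1 + 2*A x))) - ((pd (Fin.succ 2) A x)/((1 + 2*A x)))*((pd (Fin.succ 2) A x)/((1 + 2*A x))) + ((-(pd (Fin.succ 2) A x)*0 - (pd (Fin.succ 2) A x)*0 + (pd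 (Fin.succ 0) A x)*1)/((1 - 2*A x)))*((pd (Fin.succ 0) A x)/((1 + 2*A x))) - ((((deriv a (x 0) * (a (x 0))⁻¹)) - (pd 0 A x)/((1 - 2*A x))) * 0)*(((((deriv a (x 0) * (a (x 0))⁻¹))*((1 - 2*A x)) - (pd 0 A x))/((1 + 2*A x))) * 0) + ((-(pd (Fin.succ 2) A x)*0 - (pd (Fin.succ 2) A x)*0 + (pd (Fin.succ 1) A x)*1)/((1 - 2*A x)))*((pd (Fin.succ 1) A x)/((1 + 2*A x))) - ((((deriv a (x 0) * (a (x 0))⁻¹)) - (pd 0 A x)/((1 - 2*A x))) * 0)*(((((deriv a (x 0) * (a (x 0))⁻¹))*((1 - 2*A x)) - (pd 0 A x))/((1 + 2*A x))) * 0) + ((-(pd (Fin.succ 2) A x)*1 - (pd (Fin.succ 2) A x)*1 + (pd (Fin.succ 2) A x)*1)/((1 - 2*A x)))*((pd (Fin.succ 2) A x)/((1 + 2*A x))) - ((((deriv a (x 0) * (a (x 0))⁻¹)) - (pd 0 A x)/((1 - 2*A x))) * 1)*(((((deriv a (x 0) * (a (x 0))⁻¹))*((1 - 2*A x)) - (pd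 0 A x))/((1 + 2*A x))) * 1)) + (((-2*0*(pd (Fin.succ 0) (pd (Fin.succ 2) A) x) + (pd (Fin.succ 0) (pd (Fin.succ 0) A) x))/((1 - 2*A x)) + (-2*0*(pd (Fin.succ 2) A x) + (pd (Fin.succ 0) A x))*2*(pd (Fin.succ 0) A x)/((1 - 2*A x))^2) - (-(pd (Fin.succ 2) (pd (Fin.succ 2) A) x)/((1 - 2*A x)) - 2*(pd (Fin.succ 2) A x)^2/((1 - 2*A x))^2) + (((((deriv a (x 0) * (a (x 0))⁻¹))*((1 - 2*A x)) - (pd 0 A x))/((1 + 2*A x))) * 1)*((((deriv a (x 0) * (a (x 0))⁻¹)) - (pd 0 A x)/((1 - 2*A x))) * 1) - (((((deriv a (x 0) * (a (x 0))⁻¹))*((1 - 2*A x)) - (pd 0 A x))/((1 + 2*A x))) * 0)*((((deriv a (x 0) * (a (x 0))⁻¹)) - (pd 0 A x)/((1 - 2*A x))) * 0) + ((-(pd (Fin.succ 2) A x)*0 - (pd (Fin.succ 2) A x)*0 + (pd (Fin.succ 0) A x)*1)/((1 - 2*A x)))*((-(pd (Fin.succ 0) A x)*1 - (pd (Fin.succ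 0) A x)*1 + (pd (Fin.succ 0) A x)*1)/((1 - 2*A x))) - ((-(pd (Fin.succ 2) A x)*1 - (pd (Fin.succ 0) A x)*0 + (pd (Fin.succ 0) A x)*0)/((1 - 2*A x)))*((-(pd (Fin.succ 0) A x)*0 - (pd (Fin.succ 2) A x)*1 + (pd (Fin.succ 0) A x)*0)/((1 - 2*A x))) + ((-(pd (Fin.succ 2) A x)*0 - (pd (Fin.succ 2) A x)*0 + (pd (Fin.succ 1) A x)*1)/((1 - 2*A x)))*((-(pd (Fin.succ 1) A x)*1 - (pd (Fin.succ 0) A x)*0 + (pd (Fin.succ 0) A x)*0)/((1 - 2*A x))) - ((-(pd (Fin.succ 2) A x)*0 - (pd (Fin.succ 0) A x)*0 + (pd (Fin.succ 1) A x)*0)/((1 - 2*A x)))*((-(pd (Fin.succ 1) A x)*0 - (pd (Fin.succ 2) A x)*0 + (pd (Fin.succ 0) A x)*0)/((1 - 2*A x))) + ((-(pd (Fin.succ 2) A x)*1 - (pd (Fin.succ 2) A x)*1 + (pd (Fin.succ 2) A x)*1)/((1 - 2*A x)))*((-(pd (Fin.succ 2) A x)*1 - (pd (Fin.succ 0) A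 x)*0 + (pd (Fin.succ 0) A x)*0)/((1 - 2*A x))) - ((-(pd (Fin.succ 2) A x)*0 - (pd (Fin.succ 0) A x)*1 + (pd (Fin.succ 2) A x)*0)/((1 - 2*A x)))*((-(pd (Fin.succ 2) A x)*0 - (pd (Fin.succ 2) A x)*0 + (pd (Fin.succ 0) A x)*1)/((1 - 2*A x)))) + (((-2*0*(pd (Fin.succ 1) (pd (Fin.succ 2) A) x) + (pd (Fin.succ 1) (pd (Fin.succ 1) A) x))/((1 - 2*A x)) + (-2*0*(pd (Fin.succ 2) A x) + (pd (Fin.succ 1) A x))*2*(pd (Fin.succ 1) A x)/((1 - 2*A x))^2) - (-(pd (Fin.succ 2) (pd (Fin.succ 2) A) x)/((1 - 2*A x)) - 2*(pd (Fin.succ 2) A x)^2/((1 - 2*A x))^2) + (((((deriv a (x 0) * (a (x 0))⁻¹))*((1 - 2*A x)) - (pd 0 A x))/((1 + 2*A x))) * 1)*((((deriv a (x 0) * (a (x 0))⁻¹)) - (pd 0 A x)/((1 - 2*A x))) * 1) - (((((deriv a (x 0) * (a (x 0))⁻¹))*((1 - 2*A x)) - (pd 0 A x))/((1 + 2*A x)))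 * 0)*((((deriv a (x 0) * (a (x 0))⁻¹)) - (pd 0 A x)/((1 - 2*A x))) * 0) + ((-(pd (Fin.succ 2) A x)*0 - (pd (Fin.succ 2) A x)*0 + (pd (Fin.succ 0) A x)*1)/((1 - 2*A x)))*((-(pd (Fin.succ 0) A x)*1 - (pd (Fin.succ 1) A x)*0 + (pd (Fin.succ 1) A x)*0)/((1 - 2*A x))) - ((-(pd (Fin.succ 2) A x)*0 - (pd (Fin.succ 1) A x)*0 + (pd (Fin.succ 0) A x)*0)/((1 - 2*A x)))*((-(pd (Fin.succ 0) A x)*0 - (pd (Fin.succ 2) A x)*0 + (pd (Fin.succ 1) A x)*0)/((1 - 2*A x))) + ((-(pd (Fin.succ 2) A x)*0 - (pd (Fin.succ 2) A x)*0 + (pd (Fin.succ 1) A x)*1)/((1 - 2*A x)))*((-(pd (Fin.succ 1) A x)*1 - (pd (Fin.succ 1) A x)*1 + (pd (Fin.succ 1) A x)*1)/((1 - 2*A x))) - ((-(pd (Fin.succ 2) A x)*1 - (pd (Fin.succ 1) A x)*0 + (pd (Fin.succ 1) A x)*0)/((1 - 2*A x)))*((-(pd (Fin.succ 1) A x)*0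 - (pd (Fin.succ 2) A x)*1 + (pd (Fin.succ 1) A x)*0)/((1 - 2*A x))) + ((-(pd (Fin.succ 2) A x)*1 - (pd (Fin.succ 2) A x)*1 + (pd (Fin.succ 2) A x)*1)/((1 - 2*A x)))*((-(pd (Fin.succ 2) A x)*1 - (pd (Fin.succ 1) A x)*0 + (pd (Fin.succ 1) A x)*0)/((1 - 2*A x))) - ((-(pd (Fin.succ 2) A x)*0 - (pd (Fin.succ 1) A x)*1 + (pd (Fin.succ 2) A x)*0)/((1 - 2*A x)))*((-(pd (Fin.succ 2) A x)*0 - (pd (Fin.succ 2) A x)*0 + (pd (Fin.succ 1) A x)*1)/((1 - 2*A x)))) + (((-2*1*(pd (Fin.succ 2) (pd (Fin.succ 2) A) x) + (pd (Fin.succ 2) (pd (Fin.succ 2) A) x))/((1 - 2*A x)) + (-2*1*(pd (Fin.succ 2) A x) + (pd (Fin.succ 2) A x))*2*(pd (Fin.succ 2) A x)/((1 - 2*A x))^2) - (-(pd (Fin.succ 2) (pd (Fin.succ 2) A) x)/((1 - 2*A x)) - 2*(pd (Fin.succ 2) A x)^2/((1 - 2*A x))^2) + (((((deriv a (x 0)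 * (a (x 0))⁻¹))*((1 - 2*A x)) - (pd 0 A x))/((1 + 2*A x))) * 1)*((((deriv a (x 0) * (a (x 0))⁻¹)) - (pd 0 A x)/((1 - 2*A x))) * 1) - (((((deriv a (x 0) * (a (x 0))⁻¹))*((1 - 2*A x)) - (pd 0 A x))/((1 + 2*A x))) * 1)*((((deriv a (x 0) * (a (x 0))⁻¹)) - (pd 0 A x)/((1 - 2*A x))) * 1) + ((-(pd (Fin.succ 2) A x)*0 - (pd (Fin.succ 2) A x)*0 + (pd (Fin.succ 0) A x)*1)/((1 - 2*A x)))*((-(pd (Fin.succ 0) A x)*1 - (pd (Fin.succ 2) A x)*0 + (pd (Fin.succ 2) A x)*0)/((1 - 2*A x))) - ((-(pd (Fin.succ 2) A x)*0 - (pd (Fin.succ 2) A x)*0 + (pd (Fin.succ 0) A x)*1)/((1 - 2*A x)))*((-(pd (Fin.succ 0) A x)*1 - (pd (Fin.succ 2) A x)*0 + (pd (Fin.succ 2) A x)*0)/((1 - 2*A x))) + ((-(pd (Fin.succ 2) A x)*0 - (pd (Fin.succ 2) A x)*0 + (pd (Fin.succ 1) A x)*1)/((1 - 2*A x)))*((-(pd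 (Fin.succ 1) A x)*1 - (pd (Fin.succ 2) A x)*0 + (pd (Fin.succ 2) A x)*0)/((1 - 2*A x))) - ((-(pd (Fin.succ 2) A x)*0 - (pd (Fin.succ 2) A x)*0 + (pd (Fin.succ 1) A x)*1)/((1 - 2*A x)))*((-(pd (Fin.succ 1) A x)*1 - (pd (Fin.succ 2) A x)*0 + (pd (Fin.succ 2) A x)*0)/((1 - 2*A x))) + ((-(pd (Fin.succ 2) A x)*1 - (pd (Fin.succ 2) A x)*1 + (pd (Fin.succ 2) A x)*1)/((1 - 2*A x)))*((-(pd (Fin.succ 2) A x)*1 - (pd (Fin.succ 2) A x)*1 + (pd (Fin.succ 2) A x)*1)/((1 - 2*A x))) - ((-(pd (Fin.succ 2) A x)*1 - (pd (Fin.succ 2) A x)*1 + (pd (Fin.succ 2) A x)*1)/((1 - 2*A x)))*((-(pd (Fin.succ 2) A x)*1 - (pd (Fin.succ 2) A x)*1 + (pd (Fin.succ 2) A x)*1)/((1 - 2*A x))))) := by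
  simp only [Ricc, Riem, sum4,
    chr000 hU ha hA hx hay hFne hGne, chr00k hU ha hA hx hay hFne hGne,
    chr0k0 hU ha hA hx hay hFne hGne, chr0ij hU ha hA hx hay hFne hGne,
    chrk0j hU ha hA hx hay hFne hGne, chrkj0 hU ha hA hx hay hFne hGne,
    chrk00 hU ha hA hx hay hFne hGne, chrkij hU ha hA hx hay hFne hGne,
    P1 hU ha hA hapos hA1 hA2 hx, P2 hU ha hA hapos hA1 hA2 hx,
    P3 hU ha hA hapos hA1 hA2 hx, P4 hU ha hA hapos hA1 hA2 hx,
    P5 hU ha hA hapos hA1 hA2 hx, P6 hU ha hA hapos hA1 hA2 hx,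
    Fin.reduceEq, reduceIte]
  ring

set_option maxHeartbeats 1000000 in
lemma hEinstE : Einst (flrwMet a A) 0 0 x
    = Ricc (flrwMet a A) 0 0 x
      - (1/2) * ((-(a (x 0)^2 * (1+2*A x))⁻¹) * Ricc (flrwMet a A) 0 0 x
        + (a (x 0)^2 * (1-2*A x))⁻¹ * (Ricc (flrwMet a A) (Fin.succ 0) (Fin.succ 0) x
          + Ricc (flrwMet a A) (Fin.succ 1) (Fin.succ 1) x
          + Ricc (flrwMet a A) (Fin.succ 2) (Fin.succ 2) x))
        * (-(a (x 0)^2 * (1+2*A x))) := by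
  simp only [Einst, Scal, sum4, mginv_eq a A x hay hFne hGne, gInvE00, gInvE0s, gInvEs0,
    gInvEss, met00v, Fin.reduceEq, reduceIte, zero_mul, add_zero, zero_add]
  ring

end main

set_option maxHeartbeats 2000000 in
lemma G00_eq {U : Set Pt} {a : ℝ → ℝ} {A : SF}
    (hU : IsOpen U) (ha : ContDiff ℝ (⊤ : ℕ∞) a) (hA : ContDiffOn ℝ (⊤ : ℕ∞) A U)
    (hapos : ∀ t, 0 < a t) (hA1 : ∀ y ∈ U, 0 < 1 + 2*A y) (hA2 : ∀ y ∈ U, 0 < 1 - 2*A y) :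
    ∀ x ∈ U, Einst (flrwMet a A) 0 0 x
      = ((1 + 2 * A x) / (1 - 2 * A x) ^ 3)
            * (∑ k : Fin 3, (3 * (pd k.succ A x) ^ 2
                + 2 * (1 - 2 * A x) * pd k.succ (pd k.succ A) x))
          + 3 * (deriv a (x 0) / a (x 0) - pd 0 A x / (1 - 2 * A x)) ^ 2 := by
  intro x hx
  have hay : a (x 0) ≠ 0 := (hapos (x 0)).ne'
  have hFne : 1 + 2*A x ≠ 0 := (hA1 x hx).ne'
  have hGne : 1 - 2*A x ≠ 0 := (hA2 x hx).ne'
  rw [hEinstE hU ha hA hapos hA1 hA2 hx hay hFne hGne,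
    hR00 hU ha hA hapos hA1 hA2 hx hay hFne hGne,
    hR11 hU ha hA hapos hA1 hA2 hx hay hFne hGne,
    hR22 hU ha hA hapos hA1 hA2 hx hay hFne hGne,
    hR33 hU ha hA hapos hA1 hA2 hx hay hFne hGne, sum3]
  linear_combination keyAlg (a (x 0)) ((deriv a (x 0) * (a (x 0))⁻¹)) ((deriv (deriv a) (x 0) * (a (x 0))⁻¹ - (deriv a (x 0))^2 * ((a (x 0))^2)⁻¹)) (pd 0 A x) (pd (Fin.succ 0) A x) (pd (Fin.succ 1) A x) (pd (Fin.succ 2) A x) (pd 0 (pd 0 A) x) (pd (Fin.succ 0) (pd (Fin.succ 0) A) x) (pd (Fin.succ 1) (pd (Fin.succ 1) A) x) (pd (Fin.succ 2) (pd (Fin.succ 2) A) x) (pd (Fin.succ 0) (pd (Fin.succ 1) A) x) (pd (Fin.succ 0) (pd (Fin.succ 2) A) x) (pd (Fin.succ 1) (pd (Fin.succ 0) A) x) (pd (Fin.succ 1) (pd (Fin.succ 2) A) x) (pd (Fin.succ 2) (pd (Fin.succ 0) A) x) (pd (Fin.succ 2) (pd (Fin.succ 1) A) x) ((1 + 2*A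 x)) ((1 - 2*A x)) hay hFne hGne


end S18

/-- Theorem 9.2, equation (9.21): for the almost FLRW metric with
equal Bardeen invariants, the temporal Einstein field equation
`G_{00} + Λ g_{00} = 8πG_N a²(1+2A) ρ` holds at a point iff
`((1+2A)/(1−2A)³) Σ_k (3(∂_k A)² + 2(1−2A)∂_k∂_k A) + 3(𝓗 − ∂_0A/(1−2A))²
  = a²(1+2A)(Λ + 8πG_N ρ)`. -/
theorem stmt_18 (U : Set Pt) (hU : IsOpen U)
    (a : ℝ → ℝ) (ha : ContDiff ℝ (⊤ : ℕ∞) a) (hapos : ∀ t, 0 < a t)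
    (A : SF) (hA : ContDiffOn ℝ (⊤ : ℕ∞) A U)
    (hA1 : ∀ x ∈ U, 0 < 1 + 2 * A x) (hA2 : ∀ x ∈ U, 0 < 1 - 2 * A x)
    (Λ GN : ℝ) (ρ : SF) (hρ : ContDiffOn ℝ (⊤ : ℕ∞) ρ U) :
    ∀ x ∈ U,
      (Einst (flrwMet a A) 0 0 x + Λ * flrwMet a A 0 0 x
          = 8 * Real.pi * GN * (a (x 0) ^ 2 * (1 + 2 * A x)) * ρ x)
      ↔ ((1 + 2 * A x) / (1 - 2 * A x) ^ 3)
            * (∑ k : Fin 3, (3 * (pd k.succ A x) ^ 2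
                + 2 * (1 - 2 * A x) * pd k.succ (pd k.succ A) x))
          + 3 * (deriv a (x 0) / a (x 0) - pd 0 A x / (1 - 2 * A x)) ^ 2
        = a (x 0) ^ 2 * (1 + 2 * A x) * (Λ + 8 * Real.pi * GN * ρ x) := by
  intro x hx
  have h := S18.G00_eq hU ha hA hapos hA1 hA2 x hx
  rw [show flrwMet a A 0 0 x = -(a (x 0)^2 * (1+2*A x)) from rfl, h]
  constructor <;> intro h2 <;> linear_combination h2
end
end

section
/- Friedmann equations for an FLRW universe (equations (9.23) and (9.24)): let g be the flat FLRW metric in conformal time, g_{00} = −a², g_{0i} = 0, g_{ij} = a² δ_{ij}, where a > 0 is a smooth function of x⁰ alone, let G_N ∈ ℝ, and let ρ, p : U → ℝ be smooth. If the Einstein field equations G_{ab} = 8π G_N T_{ab} hold on U with T_{00} = a² ρ, T_{0i} = T_{i0} = 0, and T_{ij} = a² p δ_{ij}, then 𝓗² = (8π G_N/3) a² ρ and ∂_0 𝓗 = −(4π G_N/3) a² (ρ + 3p) on U, where 𝓗 = (∂_0 a)/a. -/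
noncomputable section

/-- the flat FLRW metric in conformal time: `g_{00} = −a²`, `g_{0i} = 0`,
`g_{ij} = a²δ_{ij}`. -/
def flrw0Met (a : ℝ → ℝ) : Fin 4 → Fin 4 → SF := fun p q x =>
  Fin.cases
    (Fin.cases (-(a (x 0) ^ 2)) (fun _ => 0) q)
    (fun i => Fin.cases 0 (fun j => a (x 0) ^ 2 * (if i = j then 1 else 0)) q) p

set_option maxHeartbeats 1000000



def eta (p q : Fin 4) : ℝ := if p = q then (if p = 0 then -1 else 1) else 0

universe u
theorem fc4_1 {motive : Fin 4 → Sort u} (h0 : motive 0) (hs : ∀ i : Fin 3, motive i.succ) :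
    Fin.cases (motive := motive) h0 hs (1:Fin 4) = hs 0 := rfl
theorem fc4_2 {motive : Fin 4 → Sort u} (h0 : motive 0) (hs : ∀ i : Fin 3, motive i.succ) :
    Fin.cases (motive := motive) h0 hs (2:Fin 4) = hs 1 := rfl
theorem fc4_3 {motive : Fin 4 → Sort u} (h0 : motive 0) (hs : ∀ i : Fin 3, motive i.succ) :
    Fin.cases (motive := motive) h0 hs (3:Fin 4) = hs 2 := rfl

theorem v1 : ((1:Fin 4) : ℕ) = 1 := rfl
theorem v2 : ((2:Fin 4) : ℕ) = 2 := rfl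
theorem v3 : ((3:Fin 4) : ℕ) = 3 := rfl
theorem w1 : ((1:Fin 3) : ℕ) = 1 := rfl
theorem w2 : ((2:Fin 3) : ℕ) = 2 := rfl

theorem pd_comp (h : ℝ → ℝ) (x : Pt) (hh : DifferentiableAt ℝ h (x 0)) (e : Fin 4) :
    pd e (fun y => h (y 0)) x = if e = 0 then deriv h (x 0) else 0 := by
  have hp : HasFDerivAt (fun y : Pt => y 0) (ContinuousLinearMap.proj (R := ℝ) (φ := fun _ : Fin 4 => ℝ) 0) x :=
    (ContinuousLinearMap.proj (R := ℝ) (φ := fun _ : Fin 4 => ℝ) 0).hasFDerivAt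
  have h2 : HasFDerivAt (fun y : Pt => h (y 0)) (deriv h (x 0) • ContinuousLinearMap.proj (R := ℝ) (φ := fun _ : Fin 4 => ℝ) 0) x := hh.hasDerivAt.comp_hasFDerivAt x hp
  rw [pd, h2.fderiv]
  simp [Pi.single_apply, eq_comm]

theorem met_eq (a : ℝ → ℝ) (p q : Fin 4) :
    flrw0Met a p q = fun x => eta p q * a (x 0) ^ 2 := by
  funext x
  fin_cases p <;> fin_cases q <;> simp [flrw0Met, eta, fc4_1, fc4_2, fc4_3]

theorem mginv_eq (a : ℝ → ℝ) (hapos : ∀ t, 0 < a t) (p q : Fin 4) :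
    mginv (flrw0Met a) p q = fun x => eta p q / a (x 0) ^ 2 := by
  funext x
  have h0 : a (x 0) ≠ 0 := (hapos _).ne'
  have : (Matrix.of fun c d => flrw0Met a c d x) * (Matrix.of fun c d => eta c d / a (x 0) ^ 2) = 1 := by
    ext p q
    simp only [Matrix.mul_apply, Fin.sum_univ_four, Matrix.of_apply, Matrix.one_apply, met_eq]
    fin_cases p <;> fin_cases q <;> (norm_num [eta, Fin.ext_iff, v1, v2, v3]; try field_simp)
  rw [mginv, Matrix.inv_eq_right_inv this, Matrix.of_apply]


def Hc (a : ℝ → ℝ) : ℝ → ℝ := fun t => deriv a t / a t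

def chi (c a b : Fin 4) : ℝ :=
  (if c = b then 1 else 0) * (if a = 0 then 1 else 0)
  + (if c = a then 1 else 0) * (if b = 0 then 1 else 0)
  + eta a b * (if c = 0 then 1 else 0)

theorem pd_met (a : ℝ → ℝ) (ha : ContDiff ℝ (⊤ : ℕ∞) a) (p q e : Fin 4) (x : Pt) :
    pd e (flrw0Met a p q) x
      = eta p q * (if e = 0 then 2 * a (x 0) * deriv a (x 0) else 0) := by
  rw [met_eq]
  have hd : DifferentiableAt ℝ (fun t => eta p q * a t ^ 2) (x 0) :=
    (((ha.differentiable (by simp)).differentiableAt.pow 2).const_mul _)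
  rw [show (fun x : Pt => eta p q * a (x 0) ^ 2) = (fun y : Pt => (fun t => eta p q * a t ^ 2) (y 0)) from rfl,
    pd_comp _ _ hd]
  have : deriv (fun t => eta p q * a t ^ 2) (x 0) = eta p q * (2 * a (x 0) * deriv a (x 0)) := by
    rw [deriv_const_mul _ (show DifferentiableAt ℝ (fun t => a t ^ 2) (x 0) from (ha.differentiable (by simp)).differentiableAt.pow 2)]
    rw [deriv_fun_pow (ha.differentiable (by simp)).differentiableAt]
    ring
  rw [this]
  split <;> ring

theorem chr_eq (a : ℝ → ℝ) (ha : ContDiff ℝ (⊤ : ℕ∞) a) (hapos : ∀ t, 0 < a t) (c p q : Fin 4) :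
    Chr (flrw0Met a) c p q = fun x => Hc a (x 0) * chi c p q := by
  funext x
  have h0 : a (x 0) ≠ 0 := (hapos _).ne'
  simp only [Chr, Fin.sum_univ_four, mginv_eq a hapos, pd_met a ha, Hc]
  fin_cases c <;> fin_cases p <;> fin_cases q <;>
    (norm_num [eta, chi, Fin.ext_iff, v1, v2, v3]; try field_simp) <;> ring


theorem hHdiff (a : ℝ → ℝ) (ha : ContDiff ℝ (⊤ : ℕ∞) a) (hapos : ∀ t, 0 < a t) :
    Differentiable ℝ (Hc a) := by
  have hd : Differentiable ℝ (deriv a) :=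
    ((contDiff_infty_iff_deriv.mp (ha.of_le (by simp))).2).differentiable (by norm_num)
  exact hd.div (ha.differentiable (by simp)) fun t => (hapos t).ne'

theorem pd_chr (a : ℝ → ℝ) (ha : ContDiff ℝ (⊤ : ℕ∞) a) (hapos : ∀ t, 0 < a t)
    (e c p q : Fin 4) (x : Pt) :
    pd e (Chr (flrw0Met a) c p q) x
      = (if e = 0 then deriv (Hc a) (x 0) else 0) * chi c p q := by
  rw [chr_eq a ha hapos]
  have hd : DifferentiableAt ℝ (fun t => Hc a t * chi c p q) (x 0) :=
    ((hHdiff a ha hapos).differentiableAt.mul_const _)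
  rw [show (fun x : Pt => Hc a (x 0) * chi c p q) = (fun y : Pt => (fun t => Hc a t * chi c p q) (y 0)) from rfl,
    pd_comp _ _ hd]
  rw [deriv_mul_const (hHdiff a ha hapos).differentiableAt]
  split <;> ring

theorem ric_eq (a : ℝ → ℝ) (ha : ContDiff ℝ (⊤ : ℕ∞) a) (hapos : ∀ t, 0 < a t) (c b : Fin 4) (x : Pt) :
    Ricc (flrw0Met a) c b x
      = if c = b then (if c = 0 then -3 * deriv (Hc a) (x 0)
          else deriv (Hc a) (x 0) + 2 * Hc a (x 0) ^ 2) else 0 := by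
  have hc : ∀ c p q : Fin 4, Chr (flrw0Met a) c p q x = Hc a (x 0) * chi c p q := by
    intro c p q; rw [chr_eq a ha hapos]
  simp only [Ricc, Riem, Fin.sum_univ_four, pd_chr a ha hapos, hc]
  fin_cases c <;> fin_cases b <;>
    norm_num [chi, eta, Fin.ext_iff, v1, v2, v3] <;> ring


theorem scal_eq (a : ℝ → ℝ) (ha : ContDiff ℝ (⊤ : ℕ∞) a) (hapos : ∀ t, 0 < a t) (x : Pt) :
    Scal (flrw0Met a) x = (6 * deriv (Hc a) (x 0) + 6 * Hc a (x 0) ^ 2) / a (x 0) ^ 2 := by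
  have h0 : a (x 0) ≠ 0 := (hapos _).ne'
  have hg : ∀ p q : Fin 4, mginv (flrw0Met a) p q x = eta p q / a (x 0) ^ 2 := by
    intro p q; rw [mginv_eq a hapos]
  simp only [Scal, Fin.sum_univ_four, hg, ric_eq a ha hapos]
  norm_num [eta, Fin.ext_iff, v1, v2, v3]
  field_simp
  ring

theorem einst_eq (a : ℝ → ℝ) (ha : ContDiff ℝ (⊤ : ℕ∞) a) (hapos : ∀ t, 0 < a t) (x : Pt) :
    Einst (flrw0Met a) 0 0 x = 3 * Hc a (x 0) ^ 2
    ∧ Einst (flrw0Met a) 1 1 x = -(2 * deriv (Hc a) (x 0) + Hc a (x 0) ^ 2) := by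
  have h0 : a (x 0) ≠ 0 := (hapos _).ne'
  have hm : ∀ p q : Fin 4, flrw0Met a p q x = eta p q * a (x 0) ^ 2 := by
    intro p q; rw [met_eq]
  constructor <;>
    (simp only [Einst, ric_eq a ha hapos, scal_eq a ha hapos, hm];
     norm_num [eta, Fin.ext_iff, v1, v2, v3]; field_simp; ring)

/-- equations (9.23), (9.24), Friedmann equations: if the Einstein
field equations `G_{ab} = 8πG_N T_{ab}` hold for the flat FLRW metric in conformal time
with perfect-fluid energy momentum tensor `T_{00} = a²ρ`, `T_{0i} = T_{i0} = 0`,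
`T_{ij} = a² p δ_{ij}`, then `𝓗² = (8πG_N/3) a² ρ` and
`∂_0 𝓗 = −(4πG_N/3) a² (ρ + 3p)`, where `𝓗 = (∂_0 a)/a`. -/
theorem stmt_19 (U : Set Pt) (hU : IsOpen U)
    (a : ℝ → ℝ) (ha : ContDiff ℝ (⊤ : ℕ∞) a) (hapos : ∀ t, 0 < a t)
    (GN : ℝ) (ρ p : SF) (hρ : ContDiffOn ℝ (⊤ : ℕ∞) ρ U) (hp : ContDiffOn ℝ (⊤ : ℕ∞) p U)
    (T : Fin 4 → Fin 4 → SF)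
    (hT00 : ∀ x ∈ U, T 0 0 x = a (x 0) ^ 2 * ρ x)
    (hT0i : ∀ i : Fin 3, ∀ x ∈ U, T 0 i.succ x = 0 ∧ T i.succ 0 x = 0)
    (hTij : ∀ i j : Fin 3, ∀ x ∈ U,
      T i.succ j.succ x = a (x 0) ^ 2 * p x * (if i = j then 1 else 0))
    (hEFE : ∀ b c : Fin 4, ∀ x ∈ U,
      Einst (flrw0Met a) b c x = 8 * Real.pi * GN * T b c x) :
    ∀ x ∈ U,
      (deriv a (x 0) / a (x 0)) ^ 2 = (8 * Real.pi * GN / 3) * a (x 0) ^ 2 * ρ x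
      ∧ pd 0 (fun y => deriv a (y 0) / a (y 0)) x
          = -(4 * Real.pi * GN / 3) * a (x 0) ^ 2 * (ρ x + 3 * p x) := by
  intro x hx
  have h0 : a (x 0) ≠ 0 := (hapos _).ne'
  have E00 := hEFE 0 0 x hx
  have E11 := hEFE 1 1 x hx
  rw [(einst_eq a ha hapos x).1, hT00 x hx] at E00
  rw [(einst_eq a ha hapos x).2] at E11
  have hT := hTij 0 0 x hx
  rw [show ((0:Fin 3).succ) = (1:Fin 4) from rfl] at hT
  norm_num at hT
  rw [hT] at E11
  have hHval : Hc a (x 0) = deriv a (x 0) / a (x 0) := rfl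
  constructor
  · rw [← hHval]; linear_combination (1/3) * E00
  · have hpd : pd 0 (fun y => deriv a (y 0) / a (y 0)) x = deriv (Hc a) (x 0) := by
      rw [show (fun y : Pt => deriv a (y 0) / a (y 0)) = (fun y : Pt => Hc a (y 0)) from rfl,
        pd_comp _ _ (hHdiff a ha hapos).differentiableAt]
      simp
    rw [hpd]
    linear_combination (-1/2) * E11 - (1/6) * E00

end
end
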